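/- arXiv:math-ph/9905001 — 7 statements merged into one kernel-verified Lean document; each statement's English description precedes it below -/
import Mathlib

section
/- Commutativity relations of the symbol algebra on trace-free symmetric two-tensors: as endomorphisms of Sym²₀(ℝ^m) one has Y₂Y₅ = Y₅Y₂ = Y₅² = ((m−1)/m)·Y₅ and Y₂² = (1/2)·Y₂ + ((m−2)/(2m))·Y₅. In particular Y₂ and Y₅ commute, so the algebra generated by the identity, Y₂ and Y₅ is commutative. -/
/-! `Y₂ψ` depends on `ψ` only through the vector `ψξ`, linearly, and `Y₅ψ` only through the
scalar `⟨ξ, ψξ⟩`, namely `Y₅ψ = (⟨ξ, ψξ⟩ / |ξ|²) Y₅1`; moreover `Y₂1 = Y₅1`. Hence every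
relation reduces to computing `ψξ` and `⟨ξ, ψξ⟩` for `ψ = Y₂φ` and `ψ = Y₅φ`: both quadratic
forms equal `((m-1)/m) ⟨ξ, φξ⟩`, `Y₅φ` maps `ξ` to a multiple of `ξ`, and
`(Y₂φ)ξ = φξ/2 + ((m-2)/(2m)) (⟨ξ, φξ⟩/|ξ|²) ξ`. -/

open Matrix

namespace NLT

/-- `|ξ|²`, the squared Euclidean norm of `ξ ∈ ℝ^m`. -/
noncomputable def nsq {m : ℕ} (ξ : Fin m → ℝ) : ℝ := ∑ i, ξ i ^ 2

/-- `(X₁φ)_{αβ} = δ_{αβ} tr φ`. -/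
noncomputable def X1 {m : ℕ} (φ : Matrix (Fin m) (Fin m) ℝ) : Matrix (Fin m) (Fin m) ℝ :=
  Matrix.of fun α β => (if α = β then (1 : ℝ) else 0) * φ.trace

/-- `(X₂φ)_{αβ} = (1/(2|ξ|²)) (ξ_α (φξ)_β + ξ_β (φξ)_α)`. -/
noncomputable def X2 {m : ℕ} (ξ : Fin m → ℝ) (φ : Matrix (Fin m) (Fin m) ℝ) :
    Matrix (Fin m) (Fin m) ℝ :=
  Matrix.of fun α β => (1 / (2 * nsq ξ)) * (ξ α * φ.mulVec ξ β + ξ β * φ.mulVec ξ α)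

/-- `(X₃φ)_{αβ} = (1/|ξ|²) ξ_α ξ_β tr φ`. -/
noncomputable def X3 {m : ℕ} (ξ : Fin m → ℝ) (φ : Matrix (Fin m) (Fin m) ℝ) :
    Matrix (Fin m) (Fin m) ℝ :=
  Matrix.of fun α β => (1 / nsq ξ) * (ξ α * ξ β * φ.trace)

/-- `(X₄φ)_{αβ} = (1/|ξ|²) δ_{αβ} ⟨ξ, φξ⟩`. -/
noncomputable def X4 {m : ℕ} (ξ : Fin m → ℝ) (φ : Matrix (Fin m) (Fin m) ℝ) :
    Matrix (Fin m) (Fin m) ℝ :=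
  Matrix.of fun α β => (1 / nsq ξ) * (if α = β then (1 : ℝ) else 0) * (ξ ⬝ᵥ φ.mulVec ξ)

/-- `(X₅φ)_{αβ} = (1/|ξ|⁴) ξ_α ξ_β ⟨ξ, φξ⟩`. -/
noncomputable def X5 {m : ℕ} (ξ : Fin m → ℝ) (φ : Matrix (Fin m) (Fin m) ℝ) :
    Matrix (Fin m) (Fin m) ℝ :=
  Matrix.of fun α β => (1 / (nsq ξ) ^ 2) * (ξ α * ξ β * (ξ ⬝ᵥ φ.mulVec ξ))

/-- `Y₂ = X₂ − (1/m) X₄`, regarded on trace-free symmetric two-tensors. -/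
noncomputable def Y2 {m : ℕ} (ξ : Fin m → ℝ) (φ : Matrix (Fin m) (Fin m) ℝ) :
    Matrix (Fin m) (Fin m) ℝ :=
  X2 ξ φ - ((1 : ℝ) / m) • X4 ξ φ

/-- `Y₅ = X₅ − (1/m) X₄`, regarded on trace-free symmetric two-tensors. -/
noncomputable def Y5 {m : ℕ} (ξ : Fin m → ℝ) (φ : Matrix (Fin m) (Fin m) ℝ) :
    Matrix (Fin m) (Fin m) ℝ :=
  X5 ξ φ - ((1 : ℝ) / m) • X4 ξ φ


section

variable {m : ℕ} (ξ : Fin m → ℝ)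

lemma nsq_eq_dotProduct : nsq ξ = ξ ⬝ᵥ ξ := by
  simp [nsq, dotProduct, sq]

variable {ξ}

lemma nsq_ne_zero (hξ : ξ ≠ 0) : nsq ξ ≠ 0 := by
  rwa [nsq_eq_dotProduct, Ne, dotProduct_self_eq_zero]

lemma natCast_ne_zero_of_ne_zero (hξ : ξ ≠ 0) : (m : ℝ) ≠ 0 := by
  rintro h
  obtain rfl : m = 0 := by exact_mod_cast h
  exact hξ (Subsingleton.elim _ _)

variable (ξ) (φ ψ : Matrix (Fin m) (Fin m) ℝ)

lemma X2_eq : X2 ξ φ = (2 * nsq ξ)⁻¹ • (vecMulVec ξ (φ *ᵥ ξ) + vecMulVec (φ *ᵥ ξ) ξ) := by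
  ext α β
  simp only [X2, of_apply, Matrix.smul_apply, Matrix.add_apply, vecMulVec_apply, smul_eq_mul]
  ring

lemma X4_eq : X4 ξ φ = ((ξ ⬝ᵥ φ *ᵥ ξ) / nsq ξ) • 1 := by
  ext α β
  simp [X4, one_apply, div_eq_inv_mul]

lemma X5_eq : X5 ξ φ = ((ξ ⬝ᵥ φ *ᵥ ξ) / nsq ξ ^ 2) • vecMulVec ξ ξ := by
  ext α β
  simp only [X5, of_apply, Matrix.smul_apply, vecMulVec_apply, smul_eq_mul]
  ring

lemma Y2_add : Y2 ξ (φ + ψ) = Y2 ξ φ + Y2 ξ ψ := by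
  simp only [Y2, X2_eq, X4_eq, add_mulVec, dotProduct_add, vecMulVec_add, add_vecMulVec]
  module

lemma Y2_smul (c : ℝ) : Y2 ξ (c • φ) = c • Y2 ξ φ := by
  simp only [Y2, X2_eq, X4_eq, smul_mulVec, dotProduct_smul, vecMulVec_smul, smul_vecMulVec]
  module

lemma Y2_eq_of_mulVec_eq (h : φ *ᵥ ξ = ψ *ᵥ ξ) : Y2 ξ φ = Y2 ξ ψ := by
  simp only [Y2, X2_eq, X4_eq, h]

lemma Y2_one : Y2 ξ 1 = Y5 ξ 1 := by
  simp only [Y2, Y5, X2_eq, X4_eq, X5_eq, one_mulVec, ← nsq_eq_dotProduct]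
  by_cases hξ : nsq ξ = 0
  · simp [hξ]
  · congr 1
    field_simp
    module

variable {ξ}

lemma Y5_eq_smul_Y5_one (hξ : ξ ≠ 0) : Y5 ξ φ = ((ξ ⬝ᵥ φ *ᵥ ξ) / nsq ξ) • Y5 ξ 1 := by
  have hs := nsq_ne_zero hξ
  simp only [Y5, X4_eq, X5_eq, one_mulVec, ← nsq_eq_dotProduct]
  match_scalars <;> field_simp

lemma Y5_one_mulVec (hξ : ξ ≠ 0) : Y5 ξ 1 *ᵥ ξ = (((m : ℝ) - 1) / m) • ξ := by
  have hs := nsq_ne_zero hξ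
  have hm := natCast_ne_zero_of_ne_zero hξ
  simp only [Y5, X4_eq, X5_eq, one_mulVec, sub_mulVec, smul_mulVec, vecMulVec_mulVec,
    op_smul_eq_smul, ← nsq_eq_dotProduct]
  match_scalars
  field_simp

lemma Y5_mulVec (hξ : ξ ≠ 0) :
    Y5 ξ φ *ᵥ ξ = (((m : ℝ) - 1) / m * (ξ ⬝ᵥ φ *ᵥ ξ) / nsq ξ) • ξ := by
  rw [Y5_eq_smul_Y5_one φ hξ, smul_mulVec, Y5_one_mulVec hξ, smul_smul]
  ring_nf

lemma Y2_mulVec (hξ : ξ ≠ 0) :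
    Y2 ξ φ *ᵥ ξ =
      (1 / 2 : ℝ) • φ *ᵥ ξ + (((m : ℝ) - 2) / (2 * m) * (ξ ⬝ᵥ φ *ᵥ ξ) / nsq ξ) • ξ := by
  have hs := nsq_ne_zero hξ
  have hm := natCast_ne_zero_of_ne_zero hξ
  simp only [Y2, X2_eq, X4_eq, sub_mulVec, smul_mulVec, add_mulVec, vecMulVec_mulVec,
    op_smul_eq_smul, one_mulVec, dotProduct_comm (φ *ᵥ ξ) ξ, ← nsq_eq_dotProduct]
  match_scalars <;> field_simp

lemma dotProduct_Y5_mulVec (hξ : ξ ≠ 0) :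
    ξ ⬝ᵥ Y5 ξ φ *ᵥ ξ = ((m : ℝ) - 1) / m * (ξ ⬝ᵥ φ *ᵥ ξ) := by
  rw [Y5_mulVec φ hξ, dotProduct_smul, ← nsq_eq_dotProduct, smul_eq_mul]
  field_simp [nsq_ne_zero hξ]

lemma dotProduct_Y2_mulVec (hξ : ξ ≠ 0) :
    ξ ⬝ᵥ Y2 ξ φ *ᵥ ξ = ((m : ℝ) - 1) / m * (ξ ⬝ᵥ φ *ᵥ ξ) := by
  have hm := natCast_ne_zero_of_ne_zero hξ
  rw [Y2_mulVec φ hξ, dotProduct_add, dotProduct_smul, dotProduct_smul, ← nsq_eq_dotProduct,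
    smul_eq_mul, smul_eq_mul]
  field_simp [nsq_ne_zero hξ]
  ring

lemma Y5_eq_smul_of_dotProduct_mulVec (hξ : ξ ≠ 0) {c : ℝ}
    (h : ξ ⬝ᵥ ψ *ᵥ ξ = c * (ξ ⬝ᵥ φ *ᵥ ξ)) : Y5 ξ ψ = c • Y5 ξ φ := by
  rw [Y5_eq_smul_Y5_one ψ hξ, Y5_eq_smul_Y5_one φ hξ, h, smul_smul, mul_div_assoc]

lemma Y2_eq_Y5_of_mulVec_eq_smul (hξ : ξ ≠ 0) {c : ℝ} (h : ψ *ᵥ ξ = c • ξ) :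
    Y2 ξ ψ = Y5 ξ ψ := by
  have hY2 : Y2 ξ ψ = Y2 ξ (c • 1) :=
    Y2_eq_of_mulVec_eq ξ _ _ (by rw [h, smul_mulVec, one_mulVec])
  rw [hY2, Y2_smul, Y2_one, Y5_eq_smul_Y5_one ψ hξ, h, dotProduct_smul, ← nsq_eq_dotProduct,
    smul_eq_mul, mul_div_cancel_right₀ _ (nsq_ne_zero hξ)]

lemma Y2_Y2 (hξ : ξ ≠ 0) :
    Y2 ξ (Y2 ξ φ) = (1 / 2 : ℝ) • Y2 ξ φ + (((m : ℝ) - 2) / (2 * m)) • Y5 ξ φ := by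
  set c := ((m : ℝ) - 2) / (2 * m) * (ξ ⬝ᵥ φ *ᵥ ξ) / nsq ξ
  have hY2 : Y2 ξ (Y2 ξ φ) = Y2 ξ ((1 / 2 : ℝ) • φ + c • 1) := Y2_eq_of_mulVec_eq ξ _ _ (by
    rw [Y2_mulVec φ hξ, add_mulVec, smul_mulVec, smul_mulVec, one_mulVec])
  rw [hY2, Y2_add, Y2_smul, Y2_smul, Y2_one, Y5_eq_smul_Y5_one φ hξ, smul_smul]
  congr 2
  ring

end

theorem Y_relations_general (m : ℕ) (ξ : Fin m → ℝ) (hξ : ξ ≠ 0)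
    (φ : Matrix (Fin m) (Fin m) ℝ) :
    Y2 ξ (Y5 ξ φ) = (((m : ℝ) - 1) / m) • Y5 ξ φ ∧
    Y5 ξ (Y2 ξ φ) = (((m : ℝ) - 1) / m) • Y5 ξ φ ∧
    Y5 ξ (Y5 ξ φ) = (((m : ℝ) - 1) / m) • Y5 ξ φ ∧
    Y2 ξ (Y2 ξ φ) = (1 / 2 : ℝ) • Y2 ξ φ + (((m : ℝ) - 2) / (2 * m)) • Y5 ξ φ ∧
    Y2 ξ (Y5 ξ φ) = Y5 ξ (Y2 ξ φ) := by
  have h55 : Y5 ξ (Y5 ξ φ) = (((m : ℝ) - 1) / m) • Y5 ξ φ :=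
    Y5_eq_smul_of_dotProduct_mulVec _ _ hξ (dotProduct_Y5_mulVec φ hξ)
  have h52 : Y5 ξ (Y2 ξ φ) = (((m : ℝ) - 1) / m) • Y5 ξ φ :=
    Y5_eq_smul_of_dotProduct_mulVec _ _ hξ (dotProduct_Y2_mulVec φ hξ)
  have h25 : Y2 ξ (Y5 ξ φ) = Y5 ξ (Y5 ξ φ) :=
    Y2_eq_Y5_of_mulVec_eq_smul _ hξ (Y5_mulVec φ hξ)
  exact ⟨h25.trans h55, h52, h55, Y2_Y2 φ hξ, h25.trans (h55.trans h52.symm)⟩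

/-- Commutativity relations of the symbol algebra on trace-free symmetric two-tensors:
`Y₂Y₅ = Y₅Y₂ = Y₅² = ((m−1)/m)·Y₅` and `Y₂² = (1/2)·Y₂ + ((m−2)/(2m))·Y₅`;
in particular `Y₂` and `Y₅` commute. -/
theorem Y_relations (m : ℕ) (hm : 2 ≤ m) (ξ : Fin m → ℝ) (hξ : ξ ≠ 0)
    (φ : Matrix (Fin m) (Fin m) ℝ) (hφ : φ.IsSymm) (hφ0 : φ.trace = 0) :
    Y2 ξ (Y5 ξ φ) = (((m : ℝ) - 1) / m) • Y5 ξ φ ∧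
    Y5 ξ (Y2 ξ φ) = (((m : ℝ) - 1) / m) • Y5 ξ φ ∧
    Y5 ξ (Y5 ξ φ) = (((m : ℝ) - 1) / m) • Y5 ξ φ ∧
    Y2 ξ (Y2 ξ φ) = (1 / 2 : ℝ) • Y2 ξ φ + (((m : ℝ) - 2) / (2 * m)) • Y5 ξ φ ∧
    Y2 ξ (Y5 ξ φ) = Y5 ξ (Y2 ξ φ) :=
  Y_relations_general m ξ hξ φ

end NLT
end

section
/- Positivity criterion for the leading symbol on trace-free symmetric two-tensors: let m ≥ 3 and equip Sym²₀(ℝ^m) with the Frobenius inner product ⟨φ, ψ⟩ = Σ_{μ,ν} φ_{μν}ψ_{μν}. For real α₀, α₂, the operator α₀·id + 2α₂·Y₂ is positive definite (i.e. ⟨φ, α₀φ + 2α₂Y₂φ⟩ > 0 for every nonzero trace-free symmetric φ) if and only if α₀ > 0 and m·α₀ + 2(m−1)·α₂ > 0. -/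
open Matrix

namespace NLT

section Auxiliary

lemma sum_single {m : ℕ} (a : Fin m) (g : Fin m → ℝ) :
    ∑ l, (if l = a then (1:ℝ) else 0) * g l = g a := by
  simp [ite_mul]

lemma dsum_diag {m : ℕ} (h : Fin m → Fin m → ℝ) :
    ∑ μ, ∑ ν, (if μ = ν then (1:ℝ) else 0) * h μ ν = ∑ μ, h μ μ := by
  refine Finset.sum_congr rfl fun μ _ => ?_
  simp [ite_mul]

lemma nsq_pos {m : ℕ} {ξ : Fin m → ℝ} (hξ : ξ ≠ 0) : 0 < nsq ξ := by
  obtain ⟨i, hi⟩ := Function.ne_iff.mp hξ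
  have hi' : ξ i ≠ 0 := by simpa using hi
  have h1 : (0:ℝ) < ξ i ^ 2 := by positivity
  have h2 : ∀ j ∈ Finset.univ, (0:ℝ) ≤ ξ j ^ 2 := fun j _ => sq_nonneg _
  exact lt_of_lt_of_le h1 (Finset.single_le_sum h2 (Finset.mem_univ i))

lemma fro_pos {m : ℕ} {φ : Matrix (Fin m) (Fin m) ℝ} (h : φ ≠ 0) :
    0 < ∑ μ, ∑ ν, (φ μ ν)^2 := by
  have hnn : (0:ℝ) ≤ ∑ μ, ∑ ν, (φ μ ν)^2 :=
    Finset.sum_nonneg fun μ _ => Finset.sum_nonneg fun ν _ => sq_nonneg _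
  rcases hnn.lt_or_eq with h' | h'
  · exact h'
  · exfalso; apply h
    ext μ ν
    have h0 := (Finset.sum_eq_zero_iff_of_nonneg
      (fun μ _ => Finset.sum_nonneg fun ν _ => sq_nonneg (φ μ ν))).mp h'.symm μ (Finset.mem_univ μ)
    have h1 := (Finset.sum_eq_zero_iff_of_nonneg
      (fun ν _ => sq_nonneg (φ μ ν))).mp h0 ν (Finset.mem_univ ν)
    simpa using pow_eq_zero_iff (n := 2) (by norm_num) |>.mp h1

lemma fro_ne_zero {m : ℕ} {φ : Matrix (Fin m) (Fin m) ℝ} (h : 0 < ∑ μ, ∑ ν, (φ μ ν)^2) :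
    φ ≠ 0 := by
  intro h0
  rw [h0] at h
  simp at h

lemma quad_eq {m : ℕ} (ξ : Fin m → ℝ) (φ : Matrix (Fin m) (Fin m) ℝ)
    (hs : φ.IsSymm) (ht : φ.trace = 0) (α₀ α₂ : ℝ) :
    ∑ μ, ∑ ν, φ μ ν * (α₀ • φ + (2 * α₂) • Y2 ξ φ) μ ν =
      α₀ * (∑ μ, ∑ ν, (φ μ ν)^2) + 2 * α₂ / nsq ξ * (∑ β, (φ.mulVec ξ β)^2) := by
  set N := nsq ξ with hN
  set v := φ.mulVec ξ with hv
  set T := ξ ⬝ᵥ φ.mulVec ξ with hT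
  have hvcol : ∀ β, (∑ μ, φ μ β * ξ μ) = v β := by
    intro β
    rw [hv]
    simp only [Matrix.mulVec, dotProduct]
    exact Finset.sum_congr rfl fun μ _ => by rw [hs.apply]
  have hE1 : ∑ μ, ∑ ν, φ μ ν * (ξ μ * v ν) = ∑ β, (v β)^2 := by
    rw [Finset.sum_comm]
    refine Finset.sum_congr rfl fun ν _ => ?_
    have h1 : ∑ μ, φ μ ν * (ξ μ * v ν) = (∑ μ, φ μ ν * ξ μ) * v ν := by
      rw [Finset.sum_mul]; exact Finset.sum_congr rfl fun μ _ => by ring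
    rw [h1, hvcol, sq]
  have hE2 : ∑ μ, ∑ ν, φ μ ν * (ξ ν * v μ) = ∑ β, (v β)^2 := by
    refine Finset.sum_congr rfl fun μ _ => ?_
    have h1 : ∑ ν, φ μ ν * (ξ ν * v μ) = (∑ ν, φ μ ν * ξ ν) * v μ := by
      rw [Finset.sum_mul]; exact Finset.sum_congr rfl fun ν _ => by ring
    rw [h1]
    have h2 : (∑ ν, φ μ ν * ξ ν) = v μ := rfl
    rw [h2, sq]
  have htr : ∑ μ, φ μ μ = 0 := by simpa [Matrix.trace, Matrix.diag] using ht
  calc ∑ μ, ∑ ν, φ μ ν * (α₀ • φ + (2 * α₂) • Y2 ξ φ) μ ν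
      = ∑ μ, ∑ ν, (α₀ * (φ μ ν)^2 + (α₂ * (1/N)) * (φ μ ν * (ξ μ * v ν))
          + (α₂ * (1/N)) * (φ μ ν * (ξ ν * v μ))
          - (2 * α₂ * (1/(m:ℝ)) * (1/N) * T) * ((if μ = ν then (1:ℝ) else 0) * φ μ ν)) := by
        refine Finset.sum_congr rfl fun μ _ => Finset.sum_congr rfl fun ν _ => ?_
        simp only [Y2, X2, X4, Matrix.add_apply, Matrix.smul_apply, Matrix.sub_apply,
          Matrix.of_apply, smul_eq_mul, ← hv, ← hT, ← hN]
        ring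
    _ = α₀ * (∑ μ, ∑ ν, (φ μ ν)^2) + (α₂ * (1/N)) * (∑ μ, ∑ ν, φ μ ν * (ξ μ * v ν))
          + (α₂ * (1/N)) * (∑ μ, ∑ ν, φ μ ν * (ξ ν * v μ))
          - (2 * α₂ * (1/(m:ℝ)) * (1/N) * T)
              * (∑ μ, ∑ ν, (if μ = ν then (1:ℝ) else 0) * φ μ ν) := by
        simp only [Finset.sum_add_distrib, Finset.sum_sub_distrib, Finset.mul_sum]
    _ = α₀ * (∑ μ, ∑ ν, (φ μ ν)^2) + 2 * α₂ / N * (∑ β, (v β)^2) := by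
        rw [hE1, hE2, dsum_diag (fun μ ν => φ μ ν), htr]
        ring

lemma key_ineq {m : ℕ} (hm : 3 ≤ m) (ξ : Fin m → ℝ)
    (φ : Matrix (Fin m) (Fin m) ℝ) (hs : φ.IsSymm) (ht : φ.trace = 0)
    (hN : 0 < nsq ξ) :
    (m : ℝ) * (∑ β, (φ.mulVec ξ β)^2) ≤ ((m:ℝ) - 1) * nsq ξ * (∑ μ, ∑ ν, (φ μ ν)^2) := by
  set N := nsq ξ with hNdef
  have hN0 : N ≠ 0 := ne_of_gt hN
  set M := (m : ℝ) with hM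
  have hM3 : (3:ℝ) ≤ M := by rw [hM]; exact_mod_cast hm
  set v := φ.mulVec ξ with hv
  set A := ∑ μ, ∑ ν, (φ μ ν)^2 with hA
  set B := ∑ β, (v β)^2 with hB
  set T := ∑ l, ξ l * v l with hT
  set w : Fin m → ℝ := fun l => v l - T/N * ξ l with hw
  set W := ∑ l, (w l)^2 with hW
  set Pm : Fin m → Fin m → ℝ :=
    fun μ ν => φ μ ν - (ξ μ * v ν + ξ ν * v μ)/N + T/N^2 * (ξ μ * ξ ν) with hPm
  set S := ∑ μ, ∑ ν, (Pm μ ν)^2 with hS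
  have hξξ : (∑ l, ξ l * ξ l) = N := by
    rw [hNdef]; unfold nsq; exact Finset.sum_congr rfl fun l _ => by ring
  have hvv : (∑ l, v l * v l) = B := by
    rw [hB]; exact Finset.sum_congr rfl fun l _ => by ring
  have hvcol : ∀ β, (∑ μ, φ μ β * ξ μ) = v β := by
    intro β
    rw [hv]
    simp only [Matrix.mulVec, dotProduct]
    exact Finset.sum_congr rfl fun μ _ => by rw [hs.apply]
  have hvrow : ∀ β, (∑ ν, φ β ν * ξ ν) = v β := fun β => rfl
  have htr0 : ∑ l, φ l l = 0 := by simpa [Matrix.trace, Matrix.diag] using ht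
  have hE1 : ∑ μ, ∑ ν, φ μ ν * (ξ μ * v ν) = B := by
    rw [Finset.sum_comm]
    rw [← hvv]
    refine Finset.sum_congr rfl fun ν _ => ?_
    have h1 : ∑ μ, φ μ ν * (ξ μ * v ν) = (∑ μ, φ μ ν * ξ μ) * v ν := by
      rw [Finset.sum_mul]; exact Finset.sum_congr rfl fun μ _ => by ring
    rw [h1, hvcol]
  have hE2 : ∑ μ, ∑ ν, φ μ ν * (ξ ν * v μ) = B := by
    rw [← hvv]
    refine Finset.sum_congr rfl fun μ _ => ?_
    have h1 : ∑ ν, φ μ ν * (ξ ν * v μ) = (∑ ν, φ μ ν * ξ ν) * v μ := by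
      rw [Finset.sum_mul]; exact Finset.sum_congr rfl fun ν _ => by ring
    rw [h1, hvrow]
  have hE3 : ∑ μ, ∑ ν, φ μ ν * (ξ μ * ξ ν) = T := by
    rw [hT]
    refine Finset.sum_congr rfl fun μ _ => ?_
    have h1 : ∑ ν, φ μ ν * (ξ μ * ξ ν) = ξ μ * ∑ ν, φ μ ν * ξ ν := by
      rw [Finset.mul_sum]; exact Finset.sum_congr rfl fun ν _ => by ring
    rw [h1, hvrow]
  have hAA : ∑ μ, ∑ ν, φ μ ν * φ μ ν = A := by
    rw [hA]; exact Finset.sum_congr rfl fun μ _ => Finset.sum_congr rfl fun ν _ => by ring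
  have hWeq : W = B - T^2/N := by
    have point : ∀ l, (w l)^2
        = v l * v l - (2*T/N) * (ξ l * v l) + (T/N)^2 * (ξ l * ξ l) := by
      intro l; rw [hw]; ring
    rw [hW, Finset.sum_congr rfl fun l _ => point l]
    simp only [Finset.sum_add_distrib, Finset.sum_sub_distrib, ← Finset.mul_sum]
    rw [hvv, hξξ, ← hT]
    field_simp
    ring
  have hSeq : S = A - 2*B/N + T^2/N^2 := by
    have point : ∀ μ ν, (Pm μ ν)^2 =
        φ μ ν * φ μ ν
        - (2/N) * (φ μ ν * (ξ μ * v ν)) - (2/N) * (φ μ ν * (ξ ν * v μ))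
        + (2*T/N^2) * (φ μ ν * (ξ μ * ξ ν))
        + (1/N^2) * ((ξ μ * ξ μ) * (v ν * v ν))
        + (2/N^2) * ((ξ μ * v μ) * (ξ ν * v ν))
        + (1/N^2) * ((v μ * v μ) * (ξ ν * ξ ν))
        - (2*T/N^3) * ((ξ μ * ξ μ) * (ξ ν * v ν))
        - (2*T/N^3) * ((ξ μ * v μ) * (ξ ν * ξ ν))
        + (T^2/N^4) * ((ξ μ * ξ μ) * (ξ ν * ξ ν)) := by
      intro μ ν; rw [hPm]; ring
    rw [hS, Finset.sum_congr rfl fun μ _ => Finset.sum_congr rfl fun ν _ => point μ ν]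
    simp only [Finset.sum_add_distrib, Finset.sum_sub_distrib, ← Finset.mul_sum,
      ← Finset.sum_mul]
    rw [hAA, hE1, hE2, hE3, hξξ, hvv, ← hT]
    field_simp
    ring
  have hCS : (T/N)^2 ≤ (M - 1) * S := by
    set f : Fin m × Fin m → ℝ :=
      fun p => (if p.1 = p.2 then (1:ℝ) else 0) - ξ p.1 * ξ p.2 / N with hf
    set g : Fin m × Fin m → ℝ := fun p => Pm p.1 p.2 with hg
    have key := Finset.sum_mul_sq_le_sq_mul_sq Finset.univ f g
    have c1 : ∑ p, f p * g p = -(T/N) := by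
      rw [Fintype.sum_prod_type]
      have point : ∀ μ ν, f (μ, ν) * g (μ, ν) =
          (if μ = ν then (1:ℝ) else 0) * φ μ ν
          - (1/N) * ((if μ = ν then (1:ℝ) else 0) * (ξ μ * v ν))
          - (1/N) * ((if μ = ν then (1:ℝ) else 0) * (ξ ν * v μ))
          + (T/N^2) * ((if μ = ν then (1:ℝ) else 0) * (ξ μ * ξ ν))
          - (1/N) * (φ μ ν * (ξ μ * ξ ν))
          + (1/N^2) * ((ξ μ * ξ μ) * (ξ ν * v ν))
          + (1/N^2) * ((ξ μ * v μ) * (ξ ν * ξ ν))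
          - (T/N^3) * ((ξ μ * ξ μ) * (ξ ν * ξ ν)) := by
        intro μ ν; rw [hf, hg, hPm]; ring
      rw [Finset.sum_congr rfl fun μ _ => Finset.sum_congr rfl fun ν _ => point μ ν]
      simp only [Finset.sum_add_distrib, Finset.sum_sub_distrib, ← Finset.mul_sum,
        ← Finset.sum_mul]
      rw [dsum_diag (fun μ ν => φ μ ν), dsum_diag (fun μ ν => ξ μ * v ν),
        dsum_diag (fun μ ν => ξ ν * v μ), dsum_diag (fun μ ν => ξ μ * ξ ν),
        htr0, hE3, hξξ, ← hT]
      field_simp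
      ring
    have c2 : ∑ p, f p ^2 = M - 1 := by
      rw [Fintype.sum_prod_type]
      have point : ∀ μ ν, f (μ, ν) ^ 2 =
          (if μ = ν then (1:ℝ) else 0) * 1
          - (2/N) * ((if μ = ν then (1:ℝ) else 0) * (ξ μ * ξ ν))
          + (1/N^2) * ((ξ μ * ξ μ) * (ξ ν * ξ ν)) := by
        intro μ ν; rw [hf]
        by_cases h : μ = ν <;> simp [h] <;> ring
      rw [Finset.sum_congr rfl fun μ _ => Finset.sum_congr rfl fun ν _ => point μ ν]
      simp only [Finset.sum_add_distrib, Finset.sum_sub_distrib, ← Finset.mul_sum,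
        ← Finset.sum_mul]
      rw [dsum_diag (fun μ ν => ξ μ * ξ ν), hξξ]
      simp only [Finset.sum_ite_eq, Finset.mem_univ, if_true, Finset.sum_const,
        Finset.card_univ, Fintype.card_fin, nsmul_eq_mul, mul_one]
      rw [← hM]
      field_simp
      ring
    have c3 : ∑ p, g p ^2 = S := by
      rw [Fintype.sum_prod_type, hS]
    rw [c1, c2, c3] at key
    calc (T/N)^2 = (-(T/N))^2 := by ring
    _ ≤ (M-1) * S := key
  have hW0 : 0 ≤ W := Finset.sum_nonneg fun l _ => sq_nonneg _
  have e2 : N * A = N * S + 2 * B - T^2/N := by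
    rw [hSeq]; field_simp; ring
  have e3 : T^2/N ≤ (M-1) * (N*S) := by
    have h1 : T^2/N = N * (T/N)^2 := by field_simp
    rw [h1]
    calc N * (T/N)^2 ≤ N * ((M-1)*S) := mul_le_mul_of_nonneg_left hCS hN.le
    _ = (M-1) * (N*S) := by ring
  have goal' : (M-1)*(N*A) - M*B = ((M-1)*(N*S) - T^2/N) + (M-2)*W := by
    have e1 : B = W + T^2/N := by rw [hWeq]; ring
    linear_combination (M-1)*e2 + (M-2)*e1
  have hMW : 0 ≤ (M-2)*W := mul_nonneg (by linarith) hW0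
  linarith [goal', e3, hMW]

end Auxiliary

/-- Positivity criterion for the leading symbol `α₀·id + 2α₂·Y₂` on trace-free symmetric
two-tensors (`m ≥ 3`), in the Frobenius inner product `⟨φ,ψ⟩ = ∑ φ_{μν} ψ_{μν}`:
positive definiteness holds iff `α₀ > 0` and `m·α₀ + 2(m−1)·α₂ > 0`. -/
theorem symbol_positivity (m : ℕ) (hm : 3 ≤ m) (ξ : Fin m → ℝ) (hξ : ξ ≠ 0) (α₀ α₂ : ℝ) :
    (∀ φ : Matrix (Fin m) (Fin m) ℝ, φ.IsSymm → φ.trace = 0 → φ ≠ 0 →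
        0 < ∑ μ, ∑ ν, φ μ ν * (α₀ • φ + (2 * α₂) • Y2 ξ φ) μ ν) ↔
      (0 < α₀ ∧ 0 < (m : ℝ) * α₀ + 2 * ((m : ℝ) - 1) * α₂) := by
  have hM3 : (3:ℝ) ≤ (m:ℝ) := by exact_mod_cast hm
  have hN : 0 < nsq ξ := nsq_pos hξ
  have hN0 : nsq ξ ≠ 0 := ne_of_gt hN
  constructor
  · intro h
    obtain ⟨i, hi0⟩ := Function.ne_iff.mp hξ
    have hi : ξ i ≠ 0 := by simpa using hi0
    constructor
    · -- α₀ > 0, using a symmetric trace-free matrix killed by ξ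
      have hj : ∃ j, j ≠ i := by
        have h1 : 1 < Fintype.card (Fin m) := by simp; omega
        exact Fintype.exists_ne_of_one_lt_card h1 i
      obtain ⟨j, hji⟩ := hj
      have hk : ∃ k, k ≠ i ∧ k ≠ j := by
        by_contra hc
        push_neg at hc
        have hsub : (Finset.univ : Finset (Fin m)) ⊆ {i, j} := by
          intro k _
          simp only [Finset.mem_insert, Finset.mem_singleton]
          rcases eq_or_ne k i with h' | h'
          · exact Or.inl h'
          · exact Or.inr (hc k h')
        have hle := Finset.card_le_card hsub
        have h2 : ({i, j} : Finset (Fin m)).card ≤ 2 :=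
          (Finset.card_insert_le _ _).trans (by simp)
        simp only [Finset.card_univ, Fintype.card_fin] at hle
        omega
      obtain ⟨k, hki, hkj⟩ := hk
      set u : Fin m → ℝ := fun l => ξ i * (if l = j then 1 else 0) - ξ j * (if l = i then 1 else 0)
        with hu
      set u' : Fin m → ℝ := fun l => ξ i * (if l = k then 1 else 0) - ξ k * (if l = i then 1 else 0)
        with hu'
      set P : ℝ := ξ i^2 + ξ j^2 with hP
      set c : ℝ := ξ j * ξ k with hc
      set w : Fin m → ℝ := fun l => P * u' l - c * u l with hw
      have sumu : ∀ f : Fin m → ℝ, ∑ l, u l * f l = ξ i * f j - ξ j * f i := by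
        intro f
        have h1 : ∀ l, u l * f l = ξ i * ((if l = j then (1:ℝ) else 0) * f l)
            - ξ j * ((if l = i then (1:ℝ) else 0) * f l) := fun l => by rw [hu]; ring
        rw [Finset.sum_congr rfl fun l _ => h1 l, Finset.sum_sub_distrib, ← Finset.mul_sum,
          ← Finset.mul_sum, sum_single, sum_single]
      have sumu' : ∀ f : Fin m → ℝ, ∑ l, u' l * f l = ξ i * f k - ξ k * f i := by
        intro f
        have h1 : ∀ l, u' l * f l = ξ i * ((if l = k then (1:ℝ) else 0) * f l)
            - ξ k * ((if l = i then (1:ℝ) else 0) * f l) := fun l => by rw [hu']; ring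
        rw [Finset.sum_congr rfl fun l _ => h1 l, Finset.sum_sub_distrib, ← Finset.mul_sum,
          ← Finset.mul_sum, sum_single, sum_single]
      have sumw : ∀ f : Fin m → ℝ, ∑ l, w l * f l
          = P * (∑ l, u' l * f l) - c * (∑ l, u l * f l) := by
        intro f
        have h1 : ∀ l, w l * f l = P * (u' l * f l) - c * (u l * f l) := fun l => by rw [hw]; ring
        rw [Finset.sum_congr rfl fun l _ => h1 l, Finset.sum_sub_distrib, ← Finset.mul_sum,
          ← Finset.mul_sum]
      have huj : u j = ξ i := by simp [hu, hji]
      have hui : u i = -ξ j := by simp [hu, hji.symm]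
      have huk : u k = 0 := by simp [hu, hki, hkj]
      have hu'k : u' k = ξ i := by simp [hu', hki]
      have hPpos : 0 < P := by rw [hP]; positivity
      have hwk : w k = P * ξ i := by rw [hw]; simp [hu'k, huk]
      have s1 : ∑ l, u l * ξ l = 0 := by rw [sumu]; ring
      have s2 : ∑ l, u' l * ξ l = 0 := by rw [sumu']; ring
      have s3 : ∑ l, u l * u l = P := by rw [sumu, huj, hui, hP]; ring
      have s4 : ∑ l, u' l * u l = c := by rw [sumu', huk, hui, hc]; ring
      have sw_ξ : ∑ l, w l * ξ l = 0 := by rw [sumw, s1, s2]; ring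
      have suw : ∑ l, u l * w l = 0 := by
        have h1 : ∀ l, u l * w l = w l * u l := fun l => by ring
        rw [Finset.sum_congr rfl fun l _ => h1 l, sumw, s3, s4]; ring
      set φ1 : Matrix (Fin m) (Fin m) ℝ := Matrix.of fun α β => u α * w β + w α * u β with hφ1
      have hsym1 : φ1.IsSymm := by
        unfold Matrix.IsSymm
        ext α β
        simp only [Matrix.transpose_apply, hφ1, Matrix.of_apply]
        ring
      have htr1 : φ1.trace = 0 := by
        simp only [Matrix.trace, Matrix.diag, hφ1, Matrix.of_apply]
        have h1 : ∀ l, u l * w l + w l * u l = 2 * (u l * w l) := fun l => by ring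
        rw [Finset.sum_congr rfl fun l _ => h1 l, ← Finset.mul_sum, suw]
        ring
      have hv1 : ∀ β, φ1.mulVec ξ β = 0 := by
        intro β
        simp only [Matrix.mulVec, dotProduct, hφ1, Matrix.of_apply]
        have h1 : ∀ ν, (u β * w ν + w β * u ν) * ξ ν
            = u β * (w ν * ξ ν) + w β * (u ν * ξ ν) := fun ν => by ring
        rw [Finset.sum_congr rfl fun ν _ => h1 ν, Finset.sum_add_distrib, ← Finset.mul_sum,
          ← Finset.mul_sum, sw_ξ, s1]
        ring
      have hB1 : ∑ β, (φ1.mulVec ξ β)^2 = 0 := by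
        rw [Finset.sum_congr rfl fun β _ => by rw [hv1 β]]
        simp
      have hjk : φ1 j k = P * ξ i^2 := by
        simp only [hφ1, Matrix.of_apply, huj, huk, hwk]
        ring
      have hφ1ne : φ1 ≠ 0 := by
        intro h0
        have : φ1 j k = 0 := by rw [h0]; rfl
        rw [hjk] at this
        have : P * ξ i^2 ≠ 0 := by positivity
        tauto
      have hA1 : 0 < ∑ μ, ∑ ν, (φ1 μ ν)^2 := fro_pos hφ1ne
      have hq := h φ1 hsym1 htr1 hφ1ne
      rw [quad_eq ξ φ1 hsym1 htr1, hB1] at hq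
      have hq' : 0 < α₀ * (∑ μ, ∑ ν, (φ1 μ ν)^2) := by
        simpa using hq
      by_contra h'
      push_neg at h'
      nlinarith [hq', hA1]
    · -- second inequality, using ψ = m ξ ⊗ ξ − |ξ|² I
      set N := nsq ξ with hNdef
      set ψ : Matrix (Fin m) (Fin m) ℝ :=
        Matrix.of fun α β => (m:ℝ) * (ξ α * ξ β) - (if α = β then N else 0) with hψ
      have hsym : ψ.IsSymm := by
        unfold Matrix.IsSymm
        ext α β
        simp only [Matrix.transpose_apply, hψ, Matrix.of_apply, eq_comm (a := β)]
        ring_nf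
      have hξξ : (∑ l, ξ l * ξ l) = N := by
        rw [hNdef]; unfold nsq; exact Finset.sum_congr rfl fun l _ => by ring
      have htr : ψ.trace = 0 := by
        simp only [Matrix.trace, Matrix.diag, hψ, Matrix.of_apply, if_pos rfl]
        rw [Finset.sum_sub_distrib, ← Finset.mul_sum, hξξ]
        simp [Finset.card_univ]
      have hvψ : ∀ β, ψ.mulVec ξ β = ((m:ℝ)-1) * N * ξ β := by
        intro β
        simp only [Matrix.mulVec, dotProduct, hψ, Matrix.of_apply]
        have hpt : ∀ ν, ((m:ℝ) * (ξ β * ξ ν) - (if β = ν then N else 0)) * ξ ν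
            = (m:ℝ) * ξ β * (ξ ν * ξ ν) - (if β = ν then N * ξ ν else 0) := by
          intro ν; split <;> ring
        rw [Finset.sum_congr rfl fun ν _ => hpt ν, Finset.sum_sub_distrib, ← Finset.mul_sum, hξξ,
          Finset.sum_ite_eq Finset.univ β (fun ν => N * ξ ν)]
        simp only [Finset.mem_univ, if_pos]
        ring
      have hAψ : ∑ μ, ∑ ν, (ψ μ ν)^2 = ((m:ℝ)^2 - m) * N^2 := by
        have point : ∀ μ ν : Fin m, (ψ μ ν)^2 =
            (m:ℝ)^2 * ((ξ μ * ξ μ) * (ξ ν * ξ ν))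
              - (2*(m:ℝ)*N) * ((if μ = ν then (1:ℝ) else 0) * (ξ μ * ξ ν))
              + N^2 * ((if μ = ν then (1:ℝ) else 0) * 1) := by
          intro μ ν
          simp only [hψ, Matrix.of_apply]
          split <;> ring
        rw [Finset.sum_congr rfl fun μ _ => Finset.sum_congr rfl fun ν _ => point μ ν]
        simp only [Finset.sum_add_distrib, Finset.sum_sub_distrib, ← Finset.mul_sum,
          ← Finset.sum_mul]
        rw [dsum_diag (fun μ ν => ξ μ * ξ ν), hξξ]
        simp only [Finset.sum_ite_eq, Finset.mem_univ, if_pos, Finset.sum_const,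
          Finset.card_univ, Fintype.card_fin, nsmul_eq_mul, mul_one]
        ring
      have hBψ : ∑ β, (ψ.mulVec ξ β)^2 = ((m:ℝ)-1)^2 * N^2 * N := by
        rw [Finset.sum_congr rfl fun β _ => by rw [hvψ β]]
        have h1 : ∑ β, (((m:ℝ)-1) * N * ξ β)^2
            = ∑ β, (((m:ℝ)-1)^2 * N^2) * (ξ β * ξ β) :=
          Finset.sum_congr rfl fun β _ => by ring
        rw [h1, ← Finset.mul_sum, hξξ]
      have hψne : ψ ≠ 0 := by
        apply fro_ne_zero
        rw [hAψ]
        have h1 : 0 < (m:ℝ)^2 - m := by nlinarith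
        have h2 : 0 < N^2 := by positivity
        positivity
      have hq := h ψ hsym htr hψne
      rw [quad_eq ξ ψ hsym htr, hAψ, hBψ, ← hNdef] at hq
      have hid : α₀ * (((m:ℝ)^2 - m) * N^2) + 2 * α₂ / N * (((m:ℝ)-1)^2 * N^2 * N)
          = N^2 * (((m:ℝ)-1) * ((m:ℝ) * α₀ + 2 * ((m:ℝ) - 1) * α₂)) := by
        field_simp
      rw [hid] at hq
      by_contra h'
      push_neg at h'
      have h1 : ((m:ℝ)-1) * ((m:ℝ) * α₀ + 2 * ((m:ℝ) - 1) * α₂) ≤ 0 := by nlinarith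
      nlinarith [sq_nonneg N]
  · rintro ⟨hα₀, hC⟩ φ hs ht hne
    rw [quad_eq ξ φ hs ht]
    set N := nsq ξ with hNdef
    set A := ∑ μ, ∑ ν, (φ μ ν)^2 with hA
    set B := ∑ β, (φ.mulVec ξ β)^2 with hB
    have hApos : 0 < A := fro_pos hne
    have hB0 : 0 ≤ B := Finset.sum_nonneg fun β _ => sq_nonneg _
    have key : (m:ℝ) * B ≤ ((m:ℝ) - 1) * N * A := key_ineq hm ξ φ hs ht hN
    have hQ : α₀ * A + 2 * α₂ / N * B = (α₀ * (N * A) + 2 * α₂ * B) / N := by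
      field_simp
    rw [hQ]
    apply div_pos _ hN
    have hNA : 0 < N * A := mul_pos hN hApos
    have hm0 : (0:ℝ) < (m:ℝ) := by linarith
    rcases le_or_gt 0 α₂ with h2 | h2
    · nlinarith [mul_pos hα₀ hNA, mul_nonneg h2 hB0]
    · have h1 : 0 ≤ (-α₂) * (((m:ℝ)-1) * N * A - (m:ℝ) * B) :=
        mul_nonneg (by linarith) (by linarith [key])
      have h2' : 0 < (N * A) * ((m:ℝ) * α₀ + 2 * ((m:ℝ) - 1) * α₂) := mul_pos hNA hC
      have hid : (m:ℝ) * (α₀ * (N * A) + 2 * α₂ * B)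
          = (N * A) * ((m:ℝ) * α₀ + 2 * ((m:ℝ) - 1) * α₂)
            + 2 * ((-α₂) * (((m:ℝ)-1) * N * A - (m:ℝ) * B)) := by ring
      have hMX : 0 < (m:ℝ) * (α₀ * (N * A) + 2 * α₂ * B) := by rw [hid]; linarith
      exact (mul_pos_iff_of_pos_left hm0).mp hMX


end NLT
end

section
/- Euler-type integral representation of the confluent hypergeometric series: for real numbers a, b with b > a > 0 and any real z, ∫_0^1 u^{a−1}(1−u)^{b−a−1} e^{zu} du = Σ_{k=0}^{∞} (Γ(a+k)·Γ(b−a)/(Γ(b+k)·k!)) · z^k, where the series on the right converges absolutely; equivalently, the integral equals (Γ(a)Γ(b−a)/Γ(b)) · ₁F₁(a; b; z) with ₁F₁(a;b;z) = Σ_{k≥0} (Γ(a+k)Γ(b)/(Γ(a)Γ(b+k)k!)) z^k. -/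
open MeasureTheory Real

namespace NLT

lemma betaReal_integrable (s t : ℝ) (hs : 0 < s) (ht : 0 < t) :
    IntegrableOn (fun x : ℝ => x ^ (s - 1) * (1 - x) ^ (t - 1)) (Set.Ioo 0 1) := by
  have h := Complex.betaIntegral_convergent (u := s) (v := t) (by simpa using hs) (by simpa using ht)
  rw [intervalIntegrable_iff_integrableOn_Ioc_of_le zero_le_one] at h
  have h' : IntegrableOn (fun x : ℝ => ((x:ℂ) ^ ((s:ℂ) - 1) * (1 - (x:ℂ)) ^ ((t:ℂ) - 1)).re)
      (Set.Ioo 0 1) := (h.mono_set Set.Ioo_subset_Ioc_self).re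
  refine IntegrableOn.congr_fun h' ?_ measurableSet_Ioo
  intro x hx
  have h1 : ((x : ℝ) : ℂ) ^ ((s : ℂ) - 1) = ((x ^ (s - 1) : ℝ) : ℂ) := by
    rw [Complex.ofReal_cpow hx.1.le]; push_cast; ring_nf
  have h2 : ((1 : ℂ) - x) ^ ((t : ℂ) - 1) = (((1 - x) ^ (t - 1) : ℝ) : ℂ) := by
    rw [Complex.ofReal_cpow (by linarith [hx.2] : (0:ℝ) ≤ 1 - x)]; push_cast; ring_nf
  simp [h1, h2, ← Complex.ofReal_mul]

lemma betaReal (s t : ℝ) (hs : 0 < s) (ht : 0 < t) :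
    ∫ x in Set.Ioo (0:ℝ) 1, x ^ (s - 1) * (1 - x) ^ (t - 1)
      = Real.Gamma s * Real.Gamma t / Real.Gamma (s + t) := by
  have h := Complex.Gamma_mul_Gamma_eq_betaIntegral (s := s) (t := t)
    (by simpa using hs) (by simpa using ht)
  have h1 : Complex.betaIntegral s t
      = ((∫ x in Set.Ioo (0:ℝ) 1, x ^ (s - 1) * (1 - x) ^ (t - 1) : ℝ) : ℂ) := by
    rw [Complex.betaIntegral, intervalIntegral.integral_of_le zero_le_one,
      integral_Ioc_eq_integral_Ioo]
    rw [show ((∫ x in Set.Ioo (0:ℝ) 1, x ^ (s - 1) * (1 - x) ^ (t - 1) : ℝ) : ℂ)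
        = ∫ x in Set.Ioo (0:ℝ) 1, ((x ^ (s - 1) * (1 - x) ^ (t - 1) : ℝ) : ℂ) from
      integral_ofReal.symm]
    refine setIntegral_congr_fun measurableSet_Ioo fun x hx => ?_
    have h1 : ((x : ℝ) : ℂ) ^ ((s : ℂ) - 1) = ((x ^ (s - 1) : ℝ) : ℂ) := by
      rw [Complex.ofReal_cpow hx.1.le]; push_cast; ring_nf
    have h2 : ((1 : ℂ) - x) ^ ((t : ℂ) - 1) = (((1 - x) ^ (t - 1) : ℝ) : ℂ) := by
      rw [Complex.ofReal_cpow (by linarith [hx.2] : (0:ℝ) ≤ 1 - x)]; push_cast; ring_nf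
    simp [h1, h2, ← Complex.ofReal_mul]
  rw [h1, ← Complex.ofReal_add, Complex.Gamma_ofReal, Complex.Gamma_ofReal,
    Complex.Gamma_ofReal, ← Complex.ofReal_mul, ← Complex.ofReal_mul] at h
  have h2 : Real.Gamma s * Real.Gamma t = Real.Gamma (s + t) *
      ∫ x in Set.Ioo (0:ℝ) 1, x ^ (s - 1) * (1 - x) ^ (t - 1) := by exact_mod_cast h
  have hG : Real.Gamma (s + t) ≠ 0 := (Real.Gamma_pos_of_pos (by linarith)).ne'
  rw [eq_div_iff hG]
  linarith [h2]

/-- Euler-type integral representation of the confluent hypergeometric series: for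
`b > a > 0` and real `z`,
`∫₀¹ u^{a−1}(1−u)^{b−a−1} e^{zu} du = ∑ₖ (Γ(a+k)Γ(b−a)/(Γ(b+k)k!)) zᵏ`,
the series converging absolutely; equivalently the integral equals
`(Γ(a)Γ(b−a)/Γ(b)) · ₁F₁(a;b;z)`. -/
theorem euler_integral_hypergeometric (a b z : ℝ) (ha : 0 < a) (hb : a < b) :
    Summable (fun k : ℕ =>
      |Real.Gamma (a + k) * Real.Gamma (b - a) / (Real.Gamma (b + k) * (Nat.factorial k : ℝ))
        * z ^ k|) ∧
    ∫ u in Set.Ioo (0 : ℝ) 1, u ^ (a - 1) * (1 - u) ^ (b - a - 1) * Real.exp (z * u)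
      = ∑' k : ℕ,
          Real.Gamma (a + k) * Real.Gamma (b - a)
            / (Real.Gamma (b + k) * (Nat.factorial k : ℝ)) * z ^ k ∧
    ∫ u in Set.Ioo (0 : ℝ) 1, u ^ (a - 1) * (1 - u) ^ (b - a - 1) * Real.exp (z * u)
      = Real.Gamma a * Real.Gamma (b - a) / Real.Gamma b
        * ∑' k : ℕ,
            Real.Gamma (a + k) * Real.Gamma b
              / (Real.Gamma a * Real.Gamma (b + k) * (Nat.factorial k : ℝ)) * z ^ k := by
  have hba : (0:ℝ) < b - a := by linarith
  have hak : ∀ k : ℕ, (0:ℝ) < a + k := fun k => by positivity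
  have hbk : ∀ k : ℕ, (0:ℝ) < b + k := fun k => by
    have : (0:ℝ) ≤ k := Nat.cast_nonneg k; linarith
  have hGak : ∀ k : ℕ, 0 < Real.Gamma (a + k) := fun k => Real.Gamma_pos_of_pos (hak k)
  have hGbk : ∀ k : ℕ, 0 < Real.Gamma (b + k) := fun k => Real.Gamma_pos_of_pos (hbk k)
  have hGba : 0 < Real.Gamma (b - a) := Real.Gamma_pos_of_pos hba
  have hGa : 0 < Real.Gamma a := Real.Gamma_pos_of_pos ha
  have hGb : 0 < Real.Gamma b := Real.Gamma_pos_of_pos (lt_trans ha hb)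
  have hfac : ∀ k : ℕ, (0:ℝ) < (Nat.factorial k : ℝ) := fun k => by positivity
  -- the beta-value of each term
  have hbeta : ∀ k : ℕ,
      ∫ u in Set.Ioo (0:ℝ) 1, u ^ (a + k - 1) * (1 - u) ^ (b - a - 1)
        = Real.Gamma (a + k) * Real.Gamma (b - a) / Real.Gamma (b + k) := fun k => by
    have h := betaReal (a + k) (b - a) (hak k) hba
    rwa [show a + (k:ℝ) + (b - a) = b + k by ring] at h
  have hint : ∀ k : ℕ,
      IntegrableOn (fun u : ℝ => u ^ (a + k - 1) * (1 - u) ^ (b - a - 1)) (Set.Ioo 0 1) :=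
    fun k => betaReal_integrable (a + k) (b - a) (hak k) hba
  have hint0 : IntegrableOn (fun u : ℝ => u ^ (a - 1) * (1 - u) ^ (b - a - 1)) (Set.Ioo 0 1) :=
    betaReal_integrable a (b - a) ha hba
  -- monotone bound on beta values
  have hB0 : ∫ u in Set.Ioo (0:ℝ) 1, u ^ (a - 1) * (1 - u) ^ (b - a - 1)
      = Real.Gamma a * Real.Gamma (b - a) / Real.Gamma b := by
    have := betaReal a (b - a) ha hba
    rwa [show a + (b - a) = b by ring] at this
  have hmono : ∀ k : ℕ, Real.Gamma (a + k) * Real.Gamma (b - a) / Real.Gamma (b + k)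
      ≤ Real.Gamma a * Real.Gamma (b - a) / Real.Gamma b := fun k => by
    rw [← hbeta k, ← hB0]
    refine setIntegral_mono_on (hint k) hint0 measurableSet_Ioo fun x hx => ?_
    refine mul_le_mul_of_nonneg_right ?_ (Real.rpow_nonneg (by linarith [hx.2]) _)
    exact Real.rpow_le_rpow_of_exponent_ge hx.1 hx.2.le
      (by linarith [Nat.cast_nonneg (α := ℝ) k])
  -- abs of the series terms
  have habs : ∀ k : ℕ,
      |Real.Gamma (a + k) * Real.Gamma (b - a) / (Real.Gamma (b + k) * (Nat.factorial k : ℝ))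
        * z ^ k|
      = Real.Gamma (a + k) * Real.Gamma (b - a) / Real.Gamma (b + k) * (|z| ^ k / (Nat.factorial k : ℝ)) :=
    fun k => by
      rw [abs_mul, abs_pow, abs_div, abs_of_pos (by positivity),
        abs_of_pos (mul_pos (hGbk k) (hfac k))]
      field_simp
  have hsummaj : Summable (fun k : ℕ =>
      Real.Gamma a * Real.Gamma (b - a) / Real.Gamma b * (|z| ^ k / (Nat.factorial k : ℝ))) :=
    (Real.summable_pow_div_factorial |z|).mul_left _
  have hsum : Summable (fun k : ℕ =>
      |Real.Gamma (a + k) * Real.Gamma (b - a) / (Real.Gamma (b + k) * (Nat.factorial k : ℝ))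
        * z ^ k|) := by
    refine hsummaj.of_nonneg_of_le (fun k => abs_nonneg _) fun k => ?_
    rw [habs k]
    exact mul_le_mul_of_nonneg_right (hmono k) (by positivity)
  have key :
      ∫ u in Set.Ioo (0 : ℝ) 1, u ^ (a - 1) * (1 - u) ^ (b - a - 1) * Real.exp (z * u)
        = ∑' k : ℕ, Real.Gamma (a + k) * Real.Gamma (b - a)
            / (Real.Gamma (b + k) * (Nat.factorial k : ℝ)) * z ^ k := by
    set F : ℕ → ℝ → ℝ := fun k u => z ^ k / (Nat.factorial k : ℝ) * (u ^ (a + k - 1) * (1 - u) ^ (b - a - 1))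
      with hF
    have hFint : ∀ k : ℕ, Integrable (F k) (volume.restrict (Set.Ioo (0:ℝ) 1)) :=
      fun k => (hint k).const_mul _
    have hFval : ∀ k : ℕ, ∫ u in Set.Ioo (0:ℝ) 1, F k u
        = Real.Gamma (a + k) * Real.Gamma (b - a)
          / (Real.Gamma (b + k) * (Nat.factorial k : ℝ)) * z ^ k := fun k => by
      rw [hF]
      rw [integral_const_mul, hbeta k]
      field_simp
    have hFnorm : ∀ k : ℕ, ∫ u in Set.Ioo (0:ℝ) 1, ‖F k u‖
        = |Real.Gamma (a + k) * Real.Gamma (b - a)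
          / (Real.Gamma (b + k) * (Nat.factorial k : ℝ)) * z ^ k| := fun k => by
      rw [habs k]
      have : ∀ u ∈ Set.Ioo (0:ℝ) 1, ‖F k u‖
          = |z| ^ k / (Nat.factorial k : ℝ) * (u ^ (a + k - 1) * (1 - u) ^ (b - a - 1)) := fun u hu => by
        rw [hF]
        simp only [Real.norm_eq_abs, abs_mul, abs_div, abs_pow, Nat.abs_cast]
        rw [abs_of_nonneg (Real.rpow_nonneg hu.1.le _),
          abs_of_nonneg (Real.rpow_nonneg (by linarith [hu.2] : (0:ℝ) ≤ 1 - u) _)]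
      rw [setIntegral_congr_fun measurableSet_Ioo this, integral_const_mul, hbeta k]
      ring
    have hnormsum : Summable (fun k : ℕ => ∫ u in Set.Ioo (0:ℝ) 1, ‖F k u‖) := by
      simpa only [funext hFnorm] using hsum
    have hswap := integral_tsum_of_summable_integral_norm hFint hnormsum
    have htsum : ∀ u ∈ Set.Ioo (0:ℝ) 1,
        (∑' k : ℕ, F k u) = u ^ (a - 1) * (1 - u) ^ (b - a - 1) * Real.exp (z * u) := by
      intro u hu
      have hexp : Real.exp (z * u) = ∑' k : ℕ, (z * u) ^ k / (Nat.factorial k : ℝ) := by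
        rw [Real.exp_eq_exp_ℝ, NormedSpace.exp_eq_tsum_div]
      have hpow : ∀ k : ℕ, F k u
          = u ^ (a - 1) * (1 - u) ^ (b - a - 1) * ((z * u) ^ k / (Nat.factorial k : ℝ)) := fun k => by
        rw [hF]
        have : u ^ (a + (k:ℝ) - 1) = u ^ (a - 1) * u ^ (k : ℕ) := by
          rw [← Real.rpow_natCast u k, ← Real.rpow_add hu.1]
          ring_nf
        simp only [this, mul_pow]
        ring
      rw [tsum_congr hpow, tsum_mul_left, ← hexp]
    calc ∫ u in Set.Ioo (0:ℝ) 1, u ^ (a - 1) * (1 - u) ^ (b - a - 1) * Real.exp (z * u)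
        = ∫ u in Set.Ioo (0:ℝ) 1, ∑' k : ℕ, F k u :=
          (setIntegral_congr_fun measurableSet_Ioo htsum).symm
      _ = ∑' k : ℕ, ∫ u in Set.Ioo (0:ℝ) 1, F k u := hswap.symm
      _ = _ := tsum_congr hFval
  refine ⟨hsum, key, ?_⟩
  rw [key, ← tsum_mul_left]
  refine tsum_congr fun k => ?_
  field_simp [hGa.ne', hGb.ne', (hGbk k).ne', (hfac k).ne']

end NLT
end

section
/- Subtracted integral representation of the function Φ_n: let n ≥ 1 and m ≥ 1 be integers and z a real number. Then the function u ↦ u^{m/2−n−1}(1−u)^{n−1}·(e^{zu} − Σ_{k=0}^{n−1} (zu)^k/k!) is integrable on (0,1) and (1/(n−1)!) · ∫_0^1 u^{m/2−n−1}(1−u)^{n−1}·(e^{zu} − Σ_{k=0}^{n−1} (zu)^k/k!) du = Σ_{k=n}^{∞} (Γ(m/2−n+k)/(Γ(m/2+k)·k!)) · z^k, where the series converges absolutely. -/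
/-!
Subtracting the first `n` Taylor terms of `e^{zu}` leaves the tail `∑_{j ≥ 0} (zu)^{n+j}/(n+j)!`,
whose factor `u^n` cancels the singular `u^{-n}`: the integrand becomes a series of Beta densities
`u^{m/2+j-1}(1-u)^{n-1}`, with `B(m/2+j, n) = Γ(m/2+j)(n-1)!/Γ(m/2+j+n)`. All terms are dominated
by `|z|^{n+j}/(n+j)! · B(m/2, n)`, so the series of integrals of norms converges; this justifies
integrating termwise and also yields integrability of the integrand.
-/

open MeasureTheory Set

namespace NLT

theorem hasSum_exp_sub_sum_range (n : ℕ) (x : ℝ) :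
    HasSum (fun j => x ^ (n + j) / (n + j).factorial)
      (Real.exp x - ∑ k ∈ Finset.range n, x ^ k / k.factorial) := by
  have h := (hasSum_nat_add_iff' n).2 (NormedSpace.expSeries_div_hasSum_exp x)
  simpa only [add_comm _ n, ← Real.exp_eq_exp_ℝ] using h

theorem integrable_of_hasSum_of_summable_integral_norm {α E ι : Type*} [MeasurableSpace α]
    {μ : Measure α} [NormedAddCommGroup E] [Countable ι] {f : α → E} {F : ι → α → E}
    (hf : AEStronglyMeasurable f μ) (hF : ∀ᵐ x ∂μ, HasSum (F · x) (f x))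
    (hF_int : ∀ i, Integrable (F i) μ) (hF_sum : Summable fun i ↦ ∫ x, ‖F i x‖ ∂μ) :
    Integrable f μ := by
  refine ⟨hf, ?_⟩
  calc ∫⁻ x, ‖f x‖ₑ ∂μ ≤ ∫⁻ x, ∑' i, ‖F i x‖ₑ ∂μ :=
        lintegral_mono_ae <| hF.mono fun x hx => hx.tsum_eq ▸ enorm_tsum_le_tsum_enorm
    _ = ∑' i, ENNReal.ofReal (∫ x, ‖F i x‖ ∂μ) := by
        rw [lintegral_tsum fun i => (hF_int i).1.enorm]
        simp only [ofReal_integral_norm_eq_lintegral_enorm (hF_int _)]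
    _ < ⊤ := by
        rw [← ENNReal.ofReal_tsum_of_nonneg (fun i => integral_nonneg fun _ => norm_nonneg _)
          hF_sum]
        exact ENNReal.ofReal_lt_top

theorem integrableOn_rpow_mul_one_sub_pow {c : ℝ} (hc : -1 < c) (p : ℕ) :
    IntegrableOn (fun u : ℝ => u ^ c * (1 - u) ^ p) (Ioo 0 1) := by
  have hrpow : IntegrableOn (fun u : ℝ => u ^ c) (Ioo 0 1) :=
    (intervalIntegrable_iff_integrableOn_Ioo_of_le zero_le_one).1
      (intervalIntegral.intervalIntegrable_rpow' hc)
  refine hrpow.mono' (by fun_prop) ?_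
  filter_upwards [ae_restrict_mem measurableSet_Ioo] with u ⟨hu0, hu1⟩
  rw [norm_mul, Real.norm_of_nonneg (Real.rpow_nonneg hu0.le c), norm_pow,
    Real.norm_of_nonneg (by linarith)]
  exact mul_le_of_le_one_right (Real.rpow_nonneg hu0.le c) (pow_le_one₀ (by linarith) (by linarith))

theorem setIntegral_rpow_mul_one_sub_pow {a : ℝ} (ha : 0 < a) (p : ℕ) :
    ∫ u in Ioo (0 : ℝ) 1, u ^ (a - 1) * (1 - u) ^ p
      = Real.Gamma a * p.factorial / Real.Gamma (a + p + 1) := by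
  have hbeta : Complex.betaIntegral a (p + 1)
      = ↑(∫ u in Ioo (0 : ℝ) 1, u ^ (a - 1) * (1 - u) ^ p) := by
    rw [← integral_Ioc_eq_integral_Ioo, ← intervalIntegral.integral_of_le zero_le_one,
      Complex.betaIntegral, ← intervalIntegral.integral_ofReal]
    refine intervalIntegral.integral_congr fun u hu => ?_
    rw [uIcc_of_le zero_le_one] at hu
    simp [Complex.ofReal_cpow hu.1]
  have hGamma := Complex.Gamma_mul_Gamma_eq_betaIntegral (s := a) (t := p + 1)
    (by simpa using ha) (by simp; positivity)
  rw [hbeta, show (p : ℂ) + 1 = ((p + 1 : ℝ) : ℂ) by push_cast; rfl,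
    show (a : ℂ) + ((p + 1 : ℝ) : ℂ) = ((a + p + 1 : ℝ) : ℂ) by push_cast; ring,
    Complex.Gamma_ofReal, Complex.Gamma_ofReal, Complex.Gamma_ofReal] at hGamma
  have hreal : Real.Gamma a * Real.Gamma (p + 1)
      = Real.Gamma (a + p + 1) * ∫ u in Ioo (0 : ℝ) 1, u ^ (a - 1) * (1 - u) ^ p := by
    exact_mod_cast hGamma
  rw [Real.Gamma_nat_eq_factorial] at hreal
  have : 0 < Real.Gamma (a + p + 1) := by positivity
  field_simp
  linarith

/- `a` stands for `m/2` and `p` for `n - 1`; for `p + 1 = n`, `phiCoeff a n p j` is the paper's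
coefficient `Γ(m/2 - n + k)/(Γ(m/2 + k) k!)` at `k = n + j`. -/
noncomputable def phiIntegrand (a : ℝ) (n p : ℕ) (z u : ℝ) : ℝ :=
  u ^ (a - n - 1) * (1 - u) ^ p
    * (Real.exp (z * u) - ∑ k ∈ Finset.range n, (z * u) ^ k / (k.factorial : ℝ))

noncomputable def phiIntegrandTerm (a : ℝ) (n p : ℕ) (z : ℝ) (j : ℕ) (u : ℝ) : ℝ :=
  z ^ (n + j) / (Nat.factorial (n + j) : ℝ) * (u ^ (a + j - 1) * (1 - u) ^ p)

noncomputable def phiCoeff (a : ℝ) (n p j : ℕ) : ℝ :=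
  Real.Gamma (a + j) / (Real.Gamma (a + j + p + 1) * (Nat.factorial (n + j) : ℝ))

section

variable {a : ℝ} (n p : ℕ) (z : ℝ)

theorem hasSum_phiIntegrandTerm {u : ℝ} (hu : 0 < u) :
    HasSum (phiIntegrandTerm a n p z · u) (phiIntegrand a n p z u) := by
  have hterm (j : ℕ) : phiIntegrandTerm a n p z j u
      = u ^ (a - n - 1) * (1 - u) ^ p * ((z * u) ^ (n + j) / (Nat.factorial (n + j) : ℝ)) := by
    have hpow : u ^ (a + j - 1) = u ^ (a - n - 1) * u ^ (n + j) := by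
      rw [← Real.rpow_natCast, ← Real.rpow_add hu]
      push_cast
      ring_nf
    rw [phiIntegrandTerm, hpow, mul_pow]
    ring
  rw [funext hterm]
  exact (hasSum_exp_sub_sum_range n (z * u)).mul_left _

theorem integrableOn_phiIntegrandTerm (ha : 0 < a) (j : ℕ) :
    IntegrableOn (phiIntegrandTerm a n p z j) (Ioo 0 1) :=
  (integrableOn_rpow_mul_one_sub_pow (by linarith [(j.cast_nonneg : (0 : ℝ) ≤ j)]) p).const_mul _

theorem setIntegral_phiIntegrandTerm (ha : 0 < a) (j : ℕ) :
    ∫ u in Ioo (0 : ℝ) 1, phiIntegrandTerm a n p z j u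
      = z ^ (n + j) / (Nat.factorial (n + j) : ℝ)
        * (Real.Gamma (a + j) * p.factorial / Real.Gamma (a + j + p + 1)) := by
  have haj : 0 < a + j := by positivity
  rw [← setIntegral_rpow_mul_one_sub_pow haj]
  exact integral_const_mul _ _

theorem summable_integral_norm_phiIntegrandTerm (ha : 0 < a) :
    Summable fun j => ∫ u in Ioo (0 : ℝ) 1, ‖phiIntegrandTerm a n p z j u‖ := by
  refine .of_nonneg_of_le (fun j => integral_nonneg fun _ => norm_nonneg _) (fun j => ?_)
    ((hasSum_exp_sub_sum_range n |z|).summable.mul_right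
      (∫ u in Ioo (0 : ℝ) 1, u ^ (a - 1) * (1 - u) ^ p))
  rw [← integral_const_mul]
  refine setIntegral_mono_on (integrableOn_phiIntegrandTerm n p z ha j).norm
    ((integrableOn_rpow_mul_one_sub_pow (by linarith) p).const_mul _) measurableSet_Ioo
    fun u ⟨hu0, hu1⟩ => ?_
  have hbase : 0 ≤ u ^ (a + j - 1) * (1 - u) ^ p :=
    mul_nonneg (Real.rpow_nonneg hu0.le _) (pow_nonneg (sub_nonneg.2 hu1.le) _)
  rw [phiIntegrandTerm, norm_mul, norm_div, norm_pow, Real.norm_natCast, Real.norm_eq_abs,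
    Real.norm_of_nonneg hbase]
  gcongr _ * (?_ * _)
  exact Real.rpow_le_rpow_of_exponent_ge hu0 hu1.le (by linarith [j.cast_nonneg (α := ℝ)])

theorem integrableOn_phiIntegrand (ha : 0 < a) :
    IntegrableOn (phiIntegrand a n p z) (Ioo 0 1) := by
  refine integrable_of_hasSum_of_summable_integral_norm
    (by unfold phiIntegrand; fun_prop) ?_ (integrableOn_phiIntegrandTerm n p z ha)
    (summable_integral_norm_phiIntegrandTerm n p z ha)
  filter_upwards [ae_restrict_mem measurableSet_Ioo] with u hu
  exact hasSum_phiIntegrandTerm n p z hu.1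

theorem hasSum_setIntegral_phiIntegrand (ha : 0 < a) :
    HasSum (fun j => phiCoeff a n p j * z ^ (n + j))
      (1 / (p.factorial : ℝ) * ∫ u in Ioo (0 : ℝ) 1, phiIntegrand a n p z u) := by
  have h := hasSum_integral_of_summable_integral_norm (integrableOn_phiIntegrandTerm n p z ha)
    (summable_integral_norm_phiIntegrandTerm n p z ha)
  rw [setIntegral_congr_fun measurableSet_Ioo
    fun u hu => (hasSum_phiIntegrandTerm n p z hu.1).tsum_eq] at h
  have hcoeff (j : ℕ) : phiCoeff a n p j * z ^ (n + j)
      = 1 / (p.factorial : ℝ) * ∫ u in Ioo (0 : ℝ) 1, phiIntegrandTerm a n p z j u := by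
    rw [setIntegral_phiIntegrandTerm n p z ha, phiCoeff]
    have : 0 < Real.Gamma (a + j + p + 1) := by positivity
    field_simp
  rw [funext hcoeff]
  exact h.mul_left _

theorem summable_abs_phiCoeff_mul_pow (ha : 0 < a) :
    Summable fun j => |phiCoeff a n p j * z ^ (n + j)| :=
  (hasSum_setIntegral_phiIntegrand n p |z| ha).summable.congr fun j => by
    have hcoeff : 0 < phiCoeff a n p j := by unfold phiCoeff; positivity
    rw [abs_mul, abs_pow, abs_of_pos hcoeff]

end

/-- Subtracted integral representation of the function `Φₙ`: for integers `n ≥ 1`, `m ≥ 1`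
and real `z`, the subtracted integrand is integrable on `(0,1)` and
`(1/(n−1)!) ∫₀¹ u^{m/2−n−1}(1−u)^{n−1}(e^{zu} − ∑_{k<n} (zu)ᵏ/k!) du
  = ∑_{k≥n} (Γ(m/2−n+k)/(Γ(m/2+k)k!)) zᵏ`, the series converging absolutely. -/
theorem phi_integral_representation (n m : ℕ) (hn : 1 ≤ n) (hm : 1 ≤ m) (z : ℝ) :
    IntegrableOn (fun u : ℝ =>
      u ^ ((m : ℝ) / 2 - n - 1) * (1 - u) ^ (n - 1)
        * (Real.exp (z * u) - ∑ k ∈ Finset.range n, (z * u) ^ k / (Nat.factorial k : ℝ)))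
      (Set.Ioo 0 1) ∧
    Summable (fun j : ℕ =>
      |Real.Gamma ((m : ℝ) / 2 - n + (n + j : ℕ))
          / (Real.Gamma ((m : ℝ) / 2 + (n + j : ℕ)) * (Nat.factorial (n + j) : ℝ))
        * z ^ (n + j)|) ∧
    (1 / (Nat.factorial (n - 1) : ℝ))
        * ∫ u in Set.Ioo (0 : ℝ) 1,
            u ^ ((m : ℝ) / 2 - n - 1) * (1 - u) ^ (n - 1)
              * (Real.exp (z * u) - ∑ k ∈ Finset.range n, (z * u) ^ k / (Nat.factorial k : ℝ))
      = ∑' j : ℕ,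
          Real.Gamma ((m : ℝ) / 2 - n + (n + j : ℕ))
            / (Real.Gamma ((m : ℝ) / 2 + (n + j : ℕ)) * (Nat.factorial (n + j) : ℝ))
            * z ^ (n + j) := by
  have ha : 0 < (m : ℝ) / 2 := by positivity
  have hcoeff : ∀ j : ℕ, Real.Gamma ((m : ℝ) / 2 - n + (n + j : ℕ))
        / (Real.Gamma ((m : ℝ) / 2 + (n + j : ℕ)) * (Nat.factorial (n + j) : ℝ))
      = phiCoeff ((m : ℝ) / 2) n (n - 1) j := by
    intro j
    rw [phiCoeff]
    push_cast [Nat.cast_sub hn]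
    ring_nf
  simp only [hcoeff]
  exact ⟨integrableOn_phiIntegrand n (n - 1) z ha, summable_abs_phiCoeff_mul_pow n (n - 1) z ha,
    (hasSum_setIntegral_phiIntegrand n (n - 1) z ha).tsum_eq.symm⟩

end NLT
end

section
/- Evaluation of the antisymmetrized one-parameter integral κ arising in the heat coefficient A₁: let m ≥ 3 be an integer and μ, ν positive reals with μ ≠ ν. Then ∫_0^1 τ·([μτ + ν(1−τ)]^{−(m+2)/2} − [ντ + μ(1−τ)]^{−(m+2)/2}) dτ = −(2/m)·(μ^{−m/2} + ν^{−m/2})/(μ − ν) − (8/(m(m−2)))·(μ^{1−m/2} − ν^{1−m/2})/(μ − ν)². -/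
/-!
Substituting `u = μτ + ν(1 - τ)`, so that `τ = (u - ν)/(μ - ν)`, turns `τ u^r` into a combination
of `u^r` and `u^(r+1)`; this gives the closed form of `∫₀¹ τ (μτ + ν(1 - τ))^r dτ` for any real
`r ∉ {-1, -2}`. The theorem is the case `r = -(m+2)/2` of that formula, minus the same formula
with `μ` and `ν` exchanged.
-/

open MeasureTheory intervalIntegral

namespace NLT

section AffineRpow

variable {μ ν r τ : ℝ}

lemma mul_add_mul_one_sub_pos (hμ : 0 < μ) (hν : 0 < ν) (hτ : τ ∈ Set.Icc (0 : ℝ) 1) :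
    0 < μ * τ + ν * (1 - τ) := by
  obtain ⟨hτ0, hτ1⟩ := hτ
  rcases le_total μ ν with h | h
  · nlinarith [mul_nonneg (sub_nonneg.mpr h) (sub_nonneg.mpr hτ1)]
  · nlinarith [mul_nonneg (sub_nonneg.mpr h) hτ0]

lemma hasDerivAt_mul_add_mul_one_sub (μ ν τ : ℝ) :
    HasDerivAt (fun t ↦ μ * t + ν * (1 - t)) (μ - ν) τ :=
  (((hasDerivAt_id' τ).const_mul μ).add
    (((hasDerivAt_id' τ).const_sub 1).const_mul ν)).congr_deriv (by ring)

lemma hasDerivAt_antideriv_mul_rpow (hμν : μ ≠ ν) (hr₁ : r + 1 ≠ 0) (hr₂ : r + 2 ≠ 0)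
    (hpos : 0 < μ * τ + ν * (1 - τ)) :
    HasDerivAt
      (fun t ↦ ((μ * t + ν * (1 - t)) ^ (r + 2) / (r + 2)
        - ν * (μ * t + ν * (1 - t)) ^ (r + 1) / (r + 1)) / (μ - ν) ^ 2)
      (τ * (μ * τ + ν * (1 - τ)) ^ r) τ := by
  have hu := hasDerivAt_mul_add_mul_one_sub μ ν τ
  have h := (((hu.rpow_const (p := r + 2) (.inl hpos.ne')).div_const (r + 2)).sub
    (((hu.rpow_const (p := r + 1) (.inl hpos.ne')).const_mul ν).div_const (r + 1))).div_const
    ((μ - ν) ^ 2)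
  refine h.congr_deriv ?_
  have hsub : μ - ν ≠ 0 := sub_ne_zero.mpr hμν
  rw [show r + 2 - 1 = r + 1 by ring, Real.rpow_add_one hpos.ne', show r + 1 - 1 = r by ring]
  -- with `u = μτ + ν(1 - τ)` the derivative is `(u - ν) u^r / (μ - ν)`, and `u - ν = (μ - ν) τ`
  field_simp
  ring

lemma intervalIntegrable_mul_rpow (hμ : 0 < μ) (hν : 0 < ν) (r : ℝ) :
    IntervalIntegrable (fun τ ↦ τ * (μ * τ + ν * (1 - τ)) ^ r) volume 0 1 := by
  refine ContinuousOn.intervalIntegrable (continuousOn_id.mul (ContinuousOn.rpow_const ?_ ?_))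
  · fun_prop
  · intro τ hτ
    rw [Set.uIcc_of_le zero_le_one] at hτ
    exact .inl (mul_add_mul_one_sub_pos hμ hν hτ).ne'

lemma integral_mul_rpow (hμ : 0 < μ) (hν : 0 < ν) (hμν : μ ≠ ν) (hr₁ : r + 1 ≠ 0)
    (hr₂ : r + 2 ≠ 0) :
    ∫ τ in (0 : ℝ)..1, τ * (μ * τ + ν * (1 - τ)) ^ r
      = (μ ^ (r + 2) / (r + 2) - ν * μ ^ (r + 1) / (r + 1)
        + ν ^ (r + 2) / ((r + 1) * (r + 2))) / (μ - ν) ^ 2 := by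
  rw [integral_eq_sub_of_hasDerivAt (fun τ hτ ↦ hasDerivAt_antideriv_mul_rpow hμν hr₁ hr₂
    (mul_add_mul_one_sub_pos hμ hν (by rwa [Set.uIcc_of_le zero_le_one] at hτ)))
    (intervalIntegrable_mul_rpow hμ hν r)]
  have hν1 : ν ^ (r + 2) = ν ^ (r + 1) * ν := by
    rw [← Real.rpow_add_one hν.ne']
    ring_nf
  simp only [mul_one, sub_zero, mul_zero, zero_add, sub_self, add_zero]
  rw [hν1]
  field_simp
  ring

end AffineRpow

/-- Evaluation of the antisymmetrized one-parameter integral `κ` arising in the heat kernel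
coefficient `A₁`: for `m ≥ 3` and positive `μ ≠ ν`,
`∫₀¹ τ([μτ+ν(1−τ)]^{−(m+2)/2} − [ντ+μ(1−τ)]^{−(m+2)/2}) dτ
  = −(2/m)(μ^{−m/2}+ν^{−m/2})/(μ−ν) − (8/(m(m−2)))(μ^{1−m/2}−ν^{1−m/2})/(μ−ν)²`. -/
theorem kappa_integral (m : ℕ) (hm : 3 ≤ m) (μ ν : ℝ) (hμ : 0 < μ) (hν : 0 < ν)
    (hμν : μ ≠ ν) :
    ∫ τ in (0 : ℝ)..1,
        τ * ((μ * τ + ν * (1 - τ)) ^ (-((m : ℝ) + 2) / 2)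
          - (ν * τ + μ * (1 - τ)) ^ (-((m : ℝ) + 2) / 2))
      = -(2 / (m : ℝ)) * ((μ ^ (-(m : ℝ) / 2) + ν ^ (-(m : ℝ) / 2)) / (μ - ν))
        - (8 / ((m : ℝ) * ((m : ℝ) - 2)))
          * ((μ ^ (1 - (m : ℝ) / 2) - ν ^ (1 - (m : ℝ) / 2)) / (μ - ν) ^ 2) := by
  have hm' : (3 : ℝ) ≤ m := by exact_mod_cast hm
  set r : ℝ := -((m : ℝ) + 2) / 2
  have hr₁ : r + 1 = -(m : ℝ) / 2 := by ring
  have hr₂ : r + 2 = 1 - (m : ℝ) / 2 := by ring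
  conv_lhs => enter [1, τ]; rw [mul_sub]
  rw [integral_sub (intervalIntegrable_mul_rpow hμ hν r) (intervalIntegrable_mul_rpow hν hμ r),
    integral_mul_rpow hμ hν hμν (by linarith) (by linarith),
    integral_mul_rpow hν hμ hμν.symm (by linarith) (by linarith), hr₁, hr₂]
  have hsub : μ - ν ≠ 0 := sub_ne_zero.mpr hμν
  have hm0 : (m : ℝ) ≠ 0 := by positivity
  have hm2 : (m : ℝ) - 2 ≠ 0 := by linarith
  have hm2' : 2 - (m : ℝ) ≠ 0 := by linarith
  have hμ1 : μ ^ (1 - (m : ℝ) / 2) = μ ^ (-(m : ℝ) / 2) * μ := by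
    rw [← Real.rpow_add_one hμ.ne']
    ring_nf
  have hν1 : ν ^ (1 - (m : ℝ) / 2) = ν ^ (-(m : ℝ) / 2) * ν := by
    rw [← Real.rpow_add_one hν.ne']
    ring_nf
  rw [hμ1, hν1]
  field_simp
  ring
end NLT
end

section
/- Evaluation of the one-parameter integral γ arising in the heat coefficient A₁: let m ≥ 3 be an integer and μ, ν positive reals with μ ≠ ν. Then ∫_0^1 (τ²/2)·[μτ + ν(1−τ)]^{−(m+4)/2} dτ = (Γ(m/2−1)/(8·Γ(m/2+2)·(μ−ν))) · ( −m(m−2)·μ^{−m/2−1} − 4(m−2)·μ^{−m/2}/(μ−ν) − 8·(μ^{1−m/2} − ν^{1−m/2})/(μ−ν)² ). Moreover, for μ = ν the integral equals (1/6)·μ^{−m/2−2}. -/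
open MeasureTheory intervalIntegral

/-!
Along the segment, `u = ν + (μ - ν) τ` is affine with `τ = (u - ν) / (μ - ν)`, so the integrand
is `(u - ν)² u^p / (μ - ν)²` up to the Jacobian, and `(u - ν)² u^p` has the explicit primitive
`sqMulRpowPrimitive ν p`. For `p = -(m + 4)/2` its values at `μ` and `ν` are the powers
`μ^(-m/2-1), μ^(-m/2), μ^(1-m/2)` and `ν^(1-m/2)`, while
`Γ(m/2 + 2) = (m/2 + 1)(m/2)(m/2 - 1) Γ(m/2 - 1)` makes the Gamma prefactor rational in `m`.
-/

namespace NLT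

noncomputable def sqMulRpowPrimitive (b p u : ℝ) : ℝ :=
  u ^ (p + 3) / (p + 3) - 2 * b * u ^ (p + 2) / (p + 2) + b ^ 2 * u ^ (p + 1) / (p + 1)

theorem hasDerivAt_sqMulRpowPrimitive {b p u : ℝ} (hu : u ≠ 0) (h1 : p + 1 ≠ 0)
    (h2 : p + 2 ≠ 0) (h3 : p + 3 ≠ 0) :
    HasDerivAt (sqMulRpowPrimitive b p) ((u - b) ^ 2 * u ^ p) u := by
  have hpow (q : ℝ) : HasDerivAt (fun x : ℝ => x ^ q) (q * u ^ (q - 1)) u :=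
    Real.hasDerivAt_rpow_const (Or.inl hu)
  refine ((((hpow (p + 3)).div_const (p + 3)).sub
    (((hpow (p + 2)).const_mul (2 * b)).div_const (p + 2))).add
    (((hpow (p + 1)).const_mul (b ^ 2)).div_const (p + 1))).congr_deriv ?_
  rw [show p + 3 - 1 = p + 1 + 1 by ring, show p + 2 - 1 = p + 1 by ring, add_sub_cancel_right,
    Real.rpow_add_one hu, Real.rpow_add_one hu]
  field_simp
  ring

theorem integral_sq_mul_rpow_affine {a b p : ℝ} (ha : a ≠ 0) (hb : 0 < b) (hab : 0 < b + a)
    (h1 : p + 1 ≠ 0) (h2 : p + 2 ≠ 0) (h3 : p + 3 ≠ 0) :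
    ∫ τ in (0 : ℝ)..1, τ ^ 2 * (b + a * τ) ^ p
      = (sqMulRpowPrimitive b p (b + a) - sqMulRpowPrimitive b p b) / a ^ 3 := by
  have hpos : ∀ τ ∈ Set.uIcc (0 : ℝ) 1, 0 < b + a * τ := by
    intro τ hτ
    rw [Set.uIcc_of_le zero_le_one] at hτ
    nlinarith [mul_nonneg hτ.1 hab.le, mul_nonneg (sub_nonneg.2 hτ.2) hb.le]
  have hderiv : ∀ τ ∈ Set.uIcc (0 : ℝ) 1, HasDerivAt
      (fun τ => sqMulRpowPrimitive b p (b + a * τ) / a ^ 3) (τ ^ 2 * (b + a * τ) ^ p) τ := by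
    intro τ hτ
    have hlin : HasDerivAt (fun τ : ℝ => b + a * τ) a τ := by
      simpa using ((hasDerivAt_id τ).const_mul a).const_add b
    refine (((hasDerivAt_sqMulRpowPrimitive (hpos τ hτ).ne' h1 h2 h3).comp τ hlin).div_const
      (a ^ 3)).congr_deriv ?_
    field_simp
    ring
  have hcont : ContinuousOn (fun τ : ℝ => τ ^ 2 * (b + a * τ) ^ p) (Set.uIcc 0 1) :=
    (continuousOn_pow 2).mul <| ContinuousOn.rpow_const (by fun_prop)
      fun τ hτ => Or.inl (hpos τ hτ).ne'
  rw [integral_eq_sub_of_hasDerivAt hderiv hcont.intervalIntegrable]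
  simp only [mul_one, mul_zero, add_zero, sub_div]

theorem Gamma_add_three {x : ℝ} (hx : 0 < x) :
    Real.Gamma (x + 3) = (x + 2) * (x + 1) * x * Real.Gamma x := by
  rw [show x + 3 = x + 2 + 1 by ring, Real.Gamma_add_one (by positivity),
    show x + 2 = x + 1 + 1 by ring, Real.Gamma_add_one (by positivity),
    Real.Gamma_add_one hx.ne', mul_assoc, mul_assoc]

theorem integral_sq_half_mul_rpow_of_ne {m μ ν : ℝ} (hm : 2 < m) (hμ : 0 < μ)
    (hν : 0 < ν) (hμν : μ ≠ ν) :
    ∫ τ in (0 : ℝ)..1, (τ ^ 2 / 2) * (μ * τ + ν * (1 - τ)) ^ (-(m + 4) / 2)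
      = Real.Gamma (m / 2 - 1) / (8 * Real.Gamma (m / 2 + 2) * (μ - ν))
        * (-m * (m - 2) * μ ^ (-m / 2 - 1) - 4 * (m - 2) * μ ^ (-m / 2) / (μ - ν)
          - 8 * (μ ^ (1 - m / 2) - ν ^ (1 - m / 2)) / (μ - ν) ^ 2) := by
  have hμν' := sub_ne_zero.2 hμν
  have hprefactor : Real.Gamma (m / 2 - 1) / (8 * Real.Gamma (m / 2 + 2) * (μ - ν))
      = 1 / ((m - 2) * m * (m + 2) * (μ - ν)) := by
    have hx : 0 < m / 2 - 1 := by linarith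
    rw [show m / 2 + 2 = m / 2 - 1 + 3 by ring, Gamma_add_three hx,
      div_eq_div_iff (by have := Real.Gamma_pos_of_pos hx; positivity) (by positivity)]
    ring
  have hsubst (τ : ℝ) : τ ^ 2 / 2 * (μ * τ + ν * (1 - τ)) ^ (-(m + 4) / 2)
      = 1 / 2 * (τ ^ 2 * (ν + (μ - ν) * τ) ^ (-(m + 4) / 2)) := by
    rw [show μ * τ + ν * (1 - τ) = ν + (μ - ν) * τ by ring]
    ring
  simp_rw [hsubst, intervalIntegral.integral_const_mul]
  rw [integral_sq_mul_rpow_affine hμν' hν (by simpa using hμ) (by intro h; linarith)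
      (by intro h; linarith) (by intro h; linarith), add_sub_cancel, hprefactor]
  unfold sqMulRpowPrimitive
  set s : ℝ := -m / 2 - 1 with hs
  rw [show -(m + 4) / 2 + 1 = s by ring, show -(m + 4) / 2 + 2 = s + 1 by ring,
    show -(m + 4) / 2 + 3 = s + 1 + 1 by ring, show -m / 2 = s + 1 by ring,
    show 1 - m / 2 = s + 1 + 1 by ring]
  simp only [Real.rpow_add_one hμ.ne', Real.rpow_add_one hν.ne']
  have : s ≠ 0 := by rw [hs]; intro h; linarith
  have : s + 1 ≠ 0 := by rw [hs]; intro h; linarith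
  have : s + 1 + 1 ≠ 0 := by rw [hs]; intro h; linarith
  have : m - 2 ≠ 0 := by intro h; linarith
  have : m + 2 ≠ 0 := by intro h; linarith
  have : m ≠ 0 := by intro h; linarith
  field_simp
  ring

theorem integral_sq_half_mul_rpow_self (μ q : ℝ) :
    ∫ τ in (0 : ℝ)..1, (τ ^ 2 / 2) * (μ * τ + μ * (1 - τ)) ^ q = μ ^ q / 6 := by
  have hconst (τ : ℝ) : τ ^ 2 / 2 * (μ * τ + μ * (1 - τ)) ^ q = μ ^ q / 2 * τ ^ 2 := by
    rw [show μ * τ + μ * (1 - τ) = μ by ring]; ring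
  simp_rw [hconst, intervalIntegral.integral_const_mul, integral_pow]
  norm_num
  ring

/-- Evaluation of the one-parameter integral `γ` arising in the heat kernel coefficient
`A₁`: for `m ≥ 3` and positive `μ ≠ ν`,
`∫₀¹ (τ²/2)[μτ+ν(1−τ)]^{−(m+4)/2} dτ = (Γ(m/2−1)/(8Γ(m/2+2)(μ−ν)))
  (−m(m−2)μ^{−m/2−1} − 4(m−2)μ^{−m/2}/(μ−ν) − 8(μ^{1−m/2}−ν^{1−m/2})/(μ−ν)²)`;
moreover for coinciding arguments the integral equals `(1/6)μ^{−m/2−2}`. -/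
theorem gamma_integral (m : ℕ) (hm : 3 ≤ m) (μ ν : ℝ) (hμ : 0 < μ) (hν : 0 < ν)
    (hμν : μ ≠ ν) :
    (∫ τ in (0 : ℝ)..1, (τ ^ 2 / 2) * (μ * τ + ν * (1 - τ)) ^ (-((m : ℝ) + 4) / 2)
      = Real.Gamma ((m : ℝ) / 2 - 1) / (8 * Real.Gamma ((m : ℝ) / 2 + 2) * (μ - ν))
        * (-(m : ℝ) * ((m : ℝ) - 2) * μ ^ (-(m : ℝ) / 2 - 1)
          - 4 * ((m : ℝ) - 2) * μ ^ (-(m : ℝ) / 2) / (μ - ν)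
          - 8 * (μ ^ (1 - (m : ℝ) / 2) - ν ^ (1 - (m : ℝ) / 2)) / (μ - ν) ^ 2)) ∧
    (∫ τ in (0 : ℝ)..1, (τ ^ 2 / 2) * (μ * τ + μ * (1 - τ)) ^ (-((m : ℝ) + 4) / 2)
      = (1 / 6) * μ ^ (-(m : ℝ) / 2 - 2)) := by
  refine ⟨integral_sq_half_mul_rpow_of_ne (by exact_mod_cast hm) hμ hν hμν, ?_⟩
  rw [integral_sq_half_mul_rpow_self, show -((m : ℝ) + 4) / 2 = -(m : ℝ) / 2 - 2 by ring]
  ring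

end NLT
end

section
/- Trace of the leading-order heat kernel of a non-Laplace type operator: under the projection hypotheses on the leading symbol A(ξ) = Σ_{i=1}^{s} μ_i‖ξ‖²Π_i(ξ), for every t > 0 and every x ∈ ℝ^m the function ξ ↦ e^{i⟨ξ,x⟩}·tr(exp(−t·A(ξ))) is integrable on ℝ^m and (2π)^{−m} ∫_{ℝ^m} e^{i⟨ξ,x⟩}·tr(exp(−t·A(ξ))) dξ = Σ_{i=1}^{s} d_i·(4πtμ_i)^{−m/2}·exp(−‖x‖²/(4tμ_i)). -/
open MeasureTheory Matrix

namespace NLT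

/-- The leading symbol `A(ξ) = ∑ᵢ μᵢ ‖ξ‖² Πᵢ(ξ)` of a non-Laplace type operator. -/
noncomputable def leadSymb {m d s : ℕ} (μ : Fin s → ℝ)
    (Pi : Fin s → EuclideanSpace ℝ (Fin m) → Matrix (Fin d) (Fin d) ℂ)
    (ξ : EuclideanSpace ℝ (Fin m)) : Matrix (Fin d) (Fin d) ℂ :=
  ∑ i, ((μ i * ‖ξ‖ ^ 2 : ℝ) : ℂ) • Pi i ξ

/-!
Away from `ξ = 0` the `Πᵢ(ξ)` are a complete family of orthogonal idempotents, so
`exp(−tA(ξ)) = ∑ᵢ e^{−tμᵢ‖ξ‖²} Πᵢ(ξ)` and its trace is `∑ᵢ dᵢ e^{−tμᵢ‖ξ‖²}`. Since `{0}` is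
null, the integrand is almost everywhere a sum of Gaussians times plane waves, and the inverse
Fourier transform of `e^{−tμᵢ‖ξ‖²}` is the Euclidean heat kernel at time `tμᵢ`.
-/

open scoped RealInnerProductSpace

section Idempotents

variable {ι R A : Type*} [Fintype ι] [CommSemiring R] [Semiring A] [Algebra R A]
  {e : ι → A}

theorem _root_.OrthogonalIdempotents.sum_smul_mul_sum_smul
    (he : OrthogonalIdempotents e) (c c' : ι → R) :
    (∑ i, c i • e i) * (∑ i, c' i • e i) = ∑ i, (c i * c' i) • e i := by
  classical
  simp only [Finset.sum_mul_sum, smul_mul_smul_comm, he.mul_eq, smul_ite, smul_zero,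
    Finset.sum_ite_eq, Finset.mem_univ, if_true]

theorem _root_.CompleteOrthogonalIdempotents.sum_smul_pow
    (he : CompleteOrthogonalIdempotents e) (c : ι → R) (n : ℕ) :
    (∑ i, c i • e i) ^ n = ∑ i, c i ^ n • e i := by
  induction n with
  | zero => simp [he.complete]
  | succ n ih => simp only [pow_succ, ih, he.sum_smul_mul_sum_smul]

end Idempotents

theorem _root_.CompleteOrthogonalIdempotents.exp_sum_smul {ι 𝕂 A : Type*} [Fintype ι] [RCLike 𝕂]
    [Ring A] [Algebra 𝕂 A] [TopologicalSpace A] [IsTopologicalRing A] [ContinuousSMul 𝕂 A]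
    [T2Space A] {e : ι → A} (he : CompleteOrthogonalIdempotents e) (c : ι → 𝕂) :
    NormedSpace.exp (∑ i, c i • e i) = ∑ i, NormedSpace.exp (c i) • e i := by
  have hterm (n : ℕ) : (n.factorial⁻¹ : 𝕂) • (∑ i, c i • e i) ^ n
      = ∑ i, ((n.factorial⁻¹ : 𝕂) • c i ^ n) • e i := by
    simp only [he.sum_smul_pow, Finset.smul_sum, smul_smul, smul_eq_mul]
  rw [NormedSpace.exp_eq_tsum 𝕂]
  refine HasSum.tsum_eq ?_
  simp only [hterm]
  exact hasSum_sum fun i _ => (NormedSpace.exp_series_hasSum_exp' (c i)).smul_const (e i)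

theorem trace_exp_sum_smul {ι n : Type*} [Fintype ι] [Fintype n] [DecidableEq n]
    {P : ι → Matrix n n ℂ} (hP : CompleteOrthogonalIdempotents P) (c : ι → ℂ) :
    (NormedSpace.exp (∑ i, c i • P i)).trace = ∑ i, (P i).trace * Complex.exp (c i) := by
  rw [hP.exp_sum_smul, trace_sum]
  simp only [trace_smul, ← Complex.exp_eq_exp_ℂ, smul_eq_mul, mul_comm]

theorem trace_exp_neg_smul_leadSymb {m d s : ℕ} (μ : Fin s → ℝ)
    (Pi : Fin s → EuclideanSpace ℝ (Fin m) → Matrix (Fin d) (Fin d) ℂ) (dd : Fin s → ℕ)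
    {ξ : EuclideanSpace ℝ (Fin m)} (hP : CompleteOrthogonalIdempotents (Pi · ξ))
    (htr : ∀ i, (Pi i ξ).trace = dd i) (t : ℝ) :
    (NormedSpace.exp ((-(t : ℂ)) • leadSymb μ Pi ξ)).trace
      = ∑ i, (dd i : ℂ) * Complex.exp (-((t * μ i : ℝ) : ℂ) * ‖ξ‖ ^ 2) := by
  have hsymb : (-(t : ℂ)) • leadSymb μ Pi ξ
      = ∑ i, (-((t * μ i : ℝ) : ℂ) * ‖ξ‖ ^ 2) • Pi i ξ := by
    simp only [leadSymb, Finset.smul_sum, smul_smul]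
    refine Finset.sum_congr rfl fun i _ => ?_
    push_cast
    ring_nf
  simp only [hsymb, trace_exp_sum_smul hP, htr]

theorem two_pi_rpow_neg_mul_pi_div_rpow_half (n : ℝ) {a : ℝ} (ha : 0 < a) :
    (2 * Real.pi) ^ (-n) * (Real.pi / a) ^ (n / 2) = (4 * Real.pi * a) ^ (-n / 2) := by
  have hπ := Real.pi_pos
  have h2π : (2 * Real.pi) ^ (-n) = (4 * Real.pi ^ 2) ^ (-n / 2) := by
    rw [show 4 * Real.pi ^ 2 = (2 * Real.pi) ^ (2 : ℝ) by rw [Real.rpow_two]; ring,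
      ← Real.rpow_mul (by positivity)]
    ring_nf
  have hπa : (Real.pi / a) ^ (n / 2) = (a / Real.pi) ^ (-n / 2) := by
    rw [neg_div, Real.rpow_neg (by positivity), ← Real.inv_rpow (by positivity), inv_div]
  rw [h2π, hπa, ← Real.mul_rpow (by positivity) (by positivity)]
  congr 1
  field_simp

theorem integral_cexp_neg_mul_sq_norm_add_inner {V : Type*} [NormedAddCommGroup V]
    [InnerProductSpace ℝ V] [FiniteDimensional ℝ V] [MeasurableSpace V] [BorelSpace V]
    {a : ℝ} (ha : 0 < a) (x : V) :
    (((2 * Real.pi) ^ (-(Module.finrank ℝ V : ℝ)) : ℝ) : ℂ)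
        * ∫ ξ : V, Complex.exp (-(a : ℂ) * ‖ξ‖ ^ 2 + Complex.I * ⟪x, ξ⟫)
      = (((4 * Real.pi * a) ^ (-(Module.finrank ℝ V : ℝ) / 2) : ℝ) : ℂ)
          * Complex.exp (-((‖x‖ ^ 2 / (4 * a) : ℝ) : ℂ)) := by
  rw [GaussianFourier.integral_cexp_neg_mul_sq_norm_add (by simpa using ha), Complex.I_sq,
    ← mul_assoc, ← two_pi_rpow_neg_mul_pi_div_rpow_half _ ha, Complex.ofReal_mul,
    Complex.ofReal_cpow (x := Real.pi / a) (by positivity)]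
  push_cast
  ring_nf

theorem leading_heat_trace_general (m d s : ℕ) (hm : 1 ≤ m)
    (μ : Fin s → ℝ) (hμ : ∀ i, 0 < μ i) (dd : Fin s → ℕ)
    (Pi : Fin s → EuclideanSpace ℝ (Fin m) → Matrix (Fin d) (Fin d) ℂ)
    (hidem : ∀ i, ∀ ξ : EuclideanSpace ℝ (Fin m), ξ ≠ 0 → Pi i ξ * Pi i ξ = Pi i ξ)
    (horth : ∀ i j, i ≠ j → ∀ ξ : EuclideanSpace ℝ (Fin m), ξ ≠ 0 → Pi i ξ * Pi j ξ = 0)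
    (hsum : ∀ ξ : EuclideanSpace ℝ (Fin m), ξ ≠ 0 → ∑ i, Pi i ξ = 1)
    (htr : ∀ i, ∀ ξ : EuclideanSpace ℝ (Fin m), ξ ≠ 0 → (Pi i ξ).trace = (dd i : ℂ)) :
    ∀ t : ℝ, 0 < t → ∀ x : EuclideanSpace ℝ (Fin m),
      Integrable (fun ξ : EuclideanSpace ℝ (Fin m) =>
        Complex.exp (Complex.I * ((inner ℝ ξ x : ℝ) : ℂ))
          * (NormedSpace.exp ((-(t : ℂ)) • leadSymb μ Pi ξ)).trace) ∧
      (((2 * Real.pi) ^ (-(m : ℝ)) : ℝ) : ℂ)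
          * ∫ ξ : EuclideanSpace ℝ (Fin m),
              Complex.exp (Complex.I * ((inner ℝ ξ x : ℝ) : ℂ))
                * (NormedSpace.exp ((-(t : ℂ)) • leadSymb μ Pi ξ)).trace
        = ∑ i, (dd i : ℂ) * (((4 * Real.pi * t * μ i) ^ (-(m : ℝ) / 2) : ℝ) : ℂ)
            * Complex.exp (-((‖x‖ ^ 2 / (4 * t * μ i) : ℝ) : ℂ)) := by
  intro t ht x
  have : Nontrivial (EuclideanSpace ℝ (Fin m)) :=
    have : Nonempty (Fin m) := ⟨⟨0, hm⟩⟩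
    inferInstance
  have htμ (i : Fin s) : 0 < t * μ i := mul_pos ht (hμ i)
  set gaussian : Fin s → EuclideanSpace ℝ (Fin m) → ℂ :=
    fun i ξ => Complex.exp (-((t * μ i : ℝ) : ℂ) * ‖ξ‖ ^ 2 + Complex.I * ⟪x, ξ⟫)
  have hgaussian (i : Fin s) : Integrable (gaussian i) :=
    GaussianFourier.integrable_cexp_neg_mul_sq_norm_add (by simpa using htμ i) _ x
  have hae : (fun ξ => Complex.exp (Complex.I * ((inner ℝ ξ x : ℝ) : ℂ))
      * (NormedSpace.exp ((-(t : ℂ)) • leadSymb μ Pi ξ)).trace)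
        =ᵐ[volume] fun ξ => ∑ i, (dd i : ℂ) * gaussian i ξ := by
    filter_upwards [compl_mem_ae_iff.2 (measure_singleton 0)] with ξ hξ
    rw [trace_exp_neg_smul_leadSymb μ Pi dd ⟨⟨fun i => hidem i ξ hξ,
      fun i j hij => horth i j hij ξ hξ⟩, hsum ξ hξ⟩ (fun i => htr i ξ hξ), Finset.mul_sum]
    refine Finset.sum_congr rfl fun i _ => ?_
    rw [mul_left_comm, ← Complex.exp_add, real_inner_comm, add_comm]
  refine ⟨(integrable_finsetSum _ fun i _ => (hgaussian i).const_mul _).congr hae.symm, ?_⟩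
  rw [integral_congr_ae hae, integral_finsetSum _ fun i _ => (hgaussian i).const_mul _,
    Finset.mul_sum]
  refine Finset.sum_congr rfl fun i _ => ?_
  have hheat := integral_cexp_neg_mul_sq_norm_add_inner (htμ i) x
  rw [finrank_euclideanSpace_fin] at hheat
  rw [integral_const_mul, mul_left_comm, hheat]
  ring_nf

/-- Trace of the leading-order heat kernel of a non-Laplace type operator: for `t > 0`,
`(2π)^{−m} ∫ e^{i⟨ξ,x⟩} tr exp(−tA(ξ)) dξ = ∑ᵢ dᵢ (4πtμᵢ)^{−m/2} e^{−‖x‖²/(4tμᵢ)}`. -/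
theorem leading_heat_trace (m d s : ℕ) (hm : 1 ≤ m) (hd : 1 ≤ d) (hs : 1 ≤ s)
    (μ : Fin s → ℝ) (hμ : ∀ i, 0 < μ i) (dd : Fin s → ℕ)
    (Pi : Fin s → EuclideanSpace ℝ (Fin m) → Matrix (Fin d) (Fin d) ℂ)
    (hcont : ∀ i, ContinuousOn (Pi i) {(0 : EuclideanSpace ℝ (Fin m))}ᶜ)
    (hhom : ∀ i, ∀ c : ℝ, 0 < c → ∀ ξ : EuclideanSpace ℝ (Fin m), ξ ≠ 0 →
      Pi i (c • ξ) = Pi i ξ)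
    (hidem : ∀ i, ∀ ξ : EuclideanSpace ℝ (Fin m), ξ ≠ 0 → Pi i ξ * Pi i ξ = Pi i ξ)
    (horth : ∀ i j, i ≠ j → ∀ ξ : EuclideanSpace ℝ (Fin m), ξ ≠ 0 → Pi i ξ * Pi j ξ = 0)
    (hsum : ∀ ξ : EuclideanSpace ℝ (Fin m), ξ ≠ 0 → ∑ i, Pi i ξ = 1)
    (htr : ∀ i, ∀ ξ : EuclideanSpace ℝ (Fin m), ξ ≠ 0 → (Pi i ξ).trace = (dd i : ℂ)) :
    ∀ t : ℝ, 0 < t → ∀ x : EuclideanSpace ℝ (Fin m),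
      Integrable (fun ξ : EuclideanSpace ℝ (Fin m) =>
        Complex.exp (Complex.I * ((inner ℝ ξ x : ℝ) : ℂ))
          * (NormedSpace.exp ((-(t : ℂ)) • leadSymb μ Pi ξ)).trace) ∧
      (((2 * Real.pi) ^ (-(m : ℝ)) : ℝ) : ℂ)
          * ∫ ξ : EuclideanSpace ℝ (Fin m),
              Complex.exp (Complex.I * ((inner ℝ ξ x : ℝ) : ℂ))
                * (NormedSpace.exp ((-(t : ℂ)) • leadSymb μ Pi ξ)).trace
        = ∑ i, (dd i : ℂ) * (((4 * Real.pi * t * μ i) ^ (-(m : ℝ) / 2) : ℝ) : ℂ)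
            * Complex.exp (-((‖x‖ ^ 2 / (4 * t * μ i) : ℝ) : ℂ)) :=
  leading_heat_trace_general m d s hm μ hμ dd Pi hidem horth hsum htr

end NLT
end
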